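/- arXiv:0812.0906 — 10 statements merged into one kernel-verified Lean document; each statement's English description precedes it below -/
import Mathlib

section
/- For a qubit density matrix with eigenvalues x and 1-x (0 ≤ x ≤ 1), the von Neumann entropy satisfies -x·log x - (1-x)·log(1-x) ≤ 2·(log 2)·√(x(1-x)). -/
/-!
Write `H` for the binary entropy. Near the endpoints, `-p log p ≤ (2/e)√p` (the maximum of
`-y log y` is `1/e`, taken at `y = √p`) and `-(1-p) log (1-p) ≤ p`, which together stay below
`2 log 2 √(p(1-p))` for `p ≤ 1/9`. In the middle, the series
`(1+s) log (1+s) + (1-s) log (1-s) = ∑ s^(2k+2) / ((k+1)(2k+1))` has nonnegative terms, so at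
`s = 1 - 2p` it gives the binary Pinsker bound `H p ≤ log 2 - (1-2p)²/2`. With
`r = 2√(p(1-p))` this reads `H p ≤ log 2 - (1-r²)/2`, which is at most `r log 2` as soon as
`(1+r)/2 ≥ log 2`.
-/

open Set

namespace Real

lemma negMulLog_le_exp_neg_one {x : ℝ} (hx : 0 ≤ x) : negMulLog x ≤ exp (-1) := by
  rcases hx.eq_or_lt with rfl | hx
  · simp [(exp_pos _).le]
  simpa [negMulLog, exp_log hx, mul_comm] using mul_exp_neg_le_exp_neg_one (-log x)

lemma negMulLog_le_two_mul_exp_neg_one_mul_sqrt {x : ℝ} (hx : 0 ≤ x) :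
    negMulLog x ≤ 2 * exp (-1) * √x := by
  calc negMulLog x = 2 * √x * negMulLog √x := by
        rw [← mul_self_sqrt hx, negMulLog_mul, sqrt_mul_self (sqrt_nonneg x)]; ring
    _ ≤ 2 * √x * exp (-1) := by gcongr; exact negMulLog_le_exp_neg_one (sqrt_nonneg x)
    _ = 2 * exp (-1) * √x := by ring

lemma hasSum_one_add_mul_log_one_add_add_one_sub_mul_log_one_sub {s : ℝ} (hs : |s| < 1) :
    HasSum (fun k : ℕ => (s ^ 2) ^ (k + 1) / ((k + 1) * (2 * k + 1)))
      ((1 + s) * log (1 + s) + (1 - s) * log (1 - s)) := by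
  have hs2 : |s ^ 2| < 1 := by
    rw [abs_pow]; exact pow_lt_one₀ (abs_nonneg s) hs two_ne_zero
  have h := ((hasSum_log_sub_log_of_abs_lt_one hs).mul_left s).sub
    (hasSum_pow_div_log_of_abs_lt_one hs2)
  have hlog : log (1 - s ^ 2) = log (1 + s) + log (1 - s) := by
    rw [← log_mul (by linarith [neg_abs_le s]) (by linarith [le_abs_self s])]; ring_nf
  have hterm : (fun k : ℕ => (s ^ 2) ^ (k + 1) / ((k + 1) * (2 * k + 1))) =
      fun k : ℕ => s * (2 * (1 / (2 * k + 1)) * s ^ (2 * k + 1)) - (s ^ 2) ^ (k + 1) / (k + 1) := by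
    funext k
    field_simp
    ring
  rwa [hterm, show (1 + s) * log (1 + s) + (1 - s) * log (1 - s) =
    s * (log (1 + s) - log (1 - s)) - -log (1 - s ^ 2) by rw [hlog]; ring]

lemma sq_le_one_add_mul_log_one_add_add_one_sub_mul_log_one_sub {s : ℝ} (hs : |s| < 1) :
    s ^ 2 ≤ (1 + s) * log (1 + s) + (1 - s) * log (1 - s) := by
  simpa using le_hasSum (hasSum_one_add_mul_log_one_add_add_one_sub_mul_log_one_sub hs) 0
    (fun k _ => by positivity)

lemma binEntropy_le_log_two_sub_sq {p : ℝ} (hp₀ : 0 < p) (hp₁ : p < 1) :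
    binEntropy p ≤ log 2 - (1 - 2 * p) ^ 2 / 2 := by
  have hs : |1 - 2 * p| < 1 := by rw [abs_lt]; constructor <;> linarith
  have h := sq_le_one_add_mul_log_one_add_add_one_sub_mul_log_one_sub hs
  rw [show 1 + (1 - 2 * p) = 2 * (1 - p) by ring, show 1 - (1 - 2 * p) = 2 * p by ring,
    log_mul two_ne_zero (by linarith), log_mul two_ne_zero hp₀.ne'] at h
  rw [binEntropy, log_inv, log_inv]
  linarith

lemma binEntropy_le_two_log_two_mul_sqrt_of_le {p : ℝ} (hp₀ : 0 ≤ p) (hp : p ≤ 1 / 9) :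
    binEntropy p ≤ 2 * log 2 * √(p * (1 - p)) := by
  have hsqrt : √p ≤ 1 / 3 := sqrt_le_iff.2 ⟨by norm_num, by linarith⟩
  have hsqrt_one_sub : 9 / 10 ≤ √(1 - p) := le_sqrt_of_sq_le (by linarith)
  have hconst : 2 * exp (-1) + 1 / 3 ≤ 2 * log 2 * (9 / 10) := by
    linarith [exp_neg_one_lt_d9, log_two_gt_d9]
  have hone_sub : negMulLog (1 - p) ≤ p := by
    simpa using negMulLog_le_one_sub_self (x := 1 - p) (by linarith)
  calc binEntropy p = negMulLog p + negMulLog (1 - p) :=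
        binEntropy_eq_negMulLog_add_negMulLog_one_sub p
    _ ≤ 2 * exp (-1) * √p + √p * √p := by
        rw [mul_self_sqrt hp₀]; gcongr; exact negMulLog_le_two_mul_exp_neg_one_mul_sqrt hp₀
    _ ≤ (2 * exp (-1) + 1 / 3) * √p := by nlinarith [sqrt_nonneg p]
    _ ≤ 2 * log 2 * (9 / 10) * √p := by gcongr
    _ ≤ 2 * log 2 * (√p * √(1 - p)) := by
        have := log_pos one_lt_two
        nlinarith [sqrt_nonneg p, mul_le_mul_of_nonneg_left hsqrt_one_sub (sqrt_nonneg p)]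
    _ = 2 * log 2 * √(p * (1 - p)) := by rw [sqrt_mul hp₀]

lemma binEntropy_le_two_log_two_mul_sqrt_of_mem_Icc {p : ℝ} (hp : p ∈ Icc (1 / 9 : ℝ) (8 / 9)) :
    binEntropy p ≤ 2 * log 2 * √(p * (1 - p)) := by
  obtain ⟨hp₀, hp₁⟩ := hp
  set r := √(p * (1 - p))
  have hr_sq : r ^ 2 = p * (1 - p) := sq_sqrt (by nlinarith)
  have hr_le : r ≤ 1 / 2 := sqrt_le_iff.2 ⟨by norm_num, by nlinarith [sq_nonneg (2 * p - 1)]⟩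
  have hr_ge : 3 / 10 ≤ r := le_sqrt_of_sq_le (by nlinarith)
  calc binEntropy p ≤ log 2 - (1 - 2 * p) ^ 2 / 2 :=
        binEntropy_le_log_two_sub_sq (by linarith) (by linarith)
    _ = log 2 - (1 - 4 * r ^ 2) / 2 := by rw [hr_sq]; ring
    _ ≤ 2 * log 2 * r := by
        have hlog : log 2 ≤ (1 + 2 * r) / 2 := by linarith [log_two_lt_d9]
        linarith [mul_nonneg (sub_nonneg.2 (by linarith : 2 * r ≤ 1)) (sub_nonneg.2 hlog)]

lemma binEntropy_le_two_log_two_mul_sqrt {p : ℝ} (hp₀ : 0 ≤ p) (hp₁ : p ≤ 1) :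
    binEntropy p ≤ 2 * log 2 * √(p * (1 - p)) := by
  rcases le_or_gt p (1 / 9) with hp | hp
  · exact binEntropy_le_two_log_two_mul_sqrt_of_le hp₀ hp
  rcases le_or_gt p (8 / 9) with hp' | hp'
  · exact binEntropy_le_two_log_two_mul_sqrt_of_mem_Icc ⟨hp.le, hp'⟩
  simpa [mul_comm] using
    binEntropy_le_two_log_two_mul_sqrt_of_le (p := 1 - p) (by linarith) (by linarith)

end Real

theorem fuchs_graaf_qubit (x : ℝ) (hx0 : 0 ≤ x) (hx1 : x ≤ 1) :
    -x * Real.log x - (1 - x) * Real.log (1 - x) ≤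
      2 * Real.log 2 * Real.sqrt (x * (1 - x)) := by
  simpa only [Real.binEntropy_eq_negMulLog_add_negMulLog_one_sub, Real.negMulLog, neg_mul,
    ← sub_eq_add_neg] using Real.binEntropy_le_two_log_two_mul_sqrt hx0 hx1
end

section
/- Let x₁,…,x_N be nonnegative reals with sum 1, N ≥ 2. Then the Shannon entropy satisfies ∑ᵢ η(xᵢ) ≤ log(N)·√(2N/(N-1))·√(∑_{i<j} xᵢxⱼ), where η(t) = -t·log t with η(0)=0. -/
/-!
With `g(t) = t log² t / (1 - t) = η(t)² / (t (1 - t))` we have `η(t) = √(t (1 - t)) · √g(t)`, so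
Cauchy–Schwarz gives `∑ η(xᵢ) ≤ √(∑ xᵢ (1 - xᵢ)) · √(∑ g(xᵢ))`, and `∑ xᵢ (1 - xᵢ) = 1 - ∑ xᵢ² = 2 e₂`.
The function `g` is concave on `[0, 1]` (its limit at `1` is `0`, which is also the value that
division by zero assigns it there), so Jensen's inequality bounds `∑ g(xᵢ)` by
`N g(1/N) = N log² N / (N - 1)`.
-/

open Real Finset Set

theorem Finset.sq_sum_eq_sum_sq_add_two_mul_sum_lt {ι R : Type*} [Fintype ι] [LinearOrder ι]
    [CommSemiring R] (f : ι → R) :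
    (∑ i, f i) ^ 2 =
      ∑ i, f i ^ 2 + 2 * ∑ p ∈ univ.filter (fun p : ι × ι => p.1 < p.2), f p.1 * f p.2 := by
  have hsplit : ∀ p : ι × ι, f p.1 * f p.2 = (if p.1 < p.2 then f p.1 * f p.2 else 0)
      + (if p.2 < p.1 then f p.1 * f p.2 else 0) + (if p.1 = p.2 then f p.1 * f p.2 else 0) := by
    intro p
    rcases lt_trichotomy p.1 p.2 with h | h | h
    · simp [h, h.not_gt, h.ne]
    · simp [h]
    · simp [h, h.not_gt, h.ne']
  have hswap : ∑ p ∈ univ.filter (fun p : ι × ι => p.2 < p.1), f p.1 * f p.2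
      = ∑ p ∈ univ.filter (fun p : ι × ι => p.1 < p.2), f p.1 * f p.2 :=
    sum_equiv (Equiv.prodComm ι ι) (by simp) fun _ _ => mul_comm _ _
  have hdiag : ∑ p ∈ univ.filter (fun p : ι × ι => p.1 = p.2), f p.1 * f p.2 = ∑ i, f i ^ 2 := by
    rw [sum_filter, Fintype.sum_prod_type]
    simp [sq]
  rw [sq, sum_mul_sum, ← Fintype.sum_prod_type', Fintype.sum_congr _ _ hsplit, sum_add_distrib,
    sum_add_distrib, ← sum_filter, ← sum_filter, ← sum_filter, hswap, hdiag]
  ring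

theorem Finset.sum_mul_one_sub_eq_two_mul_sum_lt {ι R : Type*} [Fintype ι] [LinearOrder ι]
    [CommRing R] {f : ι → R} (hf : ∑ i, f i = 1) :
    ∑ i, f i * (1 - f i) = 2 * ∑ p ∈ univ.filter (fun p : ι × ι => p.1 < p.2), f p.1 * f p.2 := by
  have h := sq_sum_eq_sum_sq_add_two_mul_sum_lt f
  rw [hf, one_pow] at h
  simp only [mul_one_sub, sum_sub_distrib, hf, ← sq]
  linear_combination h

theorem ConcaveOn.sum_map_le_card_mul {ι : Type*} [Fintype ι] [Nonempty ι] {s : Set ℝ}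
    {f : ℝ → ℝ} (hf : ConcaveOn ℝ s f) {x : ι → ℝ} (hx : ∀ i, x i ∈ s) :
    ∑ i, f (x i) ≤ Fintype.card ι * f ((∑ i, x i) / Fintype.card ι) := by
  have hcard : (0 : ℝ) < Fintype.card ι := by exact_mod_cast Fintype.card_pos
  have h := hf.le_map_sum (t := univ) (w := fun _ => (Fintype.card ι : ℝ)⁻¹) (p := x)
    (fun _ _ => by positivity) (by simp [hcard.ne']) (fun i _ => hx i)
  simp only [smul_eq_mul, ← mul_sum] at h
  rw [div_eq_inv_mul]
  rwa [inv_mul_le_iff₀ hcard] at h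

noncomputable def entropyQuotient (t : ℝ) : ℝ := t * log t ^ 2 / (1 - t)

theorem entropyQuotient_nonneg {t : ℝ} (h0 : 0 ≤ t) (h1 : t ≤ 1) : 0 ≤ entropyQuotient t :=
  div_nonneg (mul_nonneg h0 (sq_nonneg _)) (sub_nonneg.2 h1)

theorem entropyQuotient_inv (n : ℝ) : entropyQuotient n⁻¹ = log n ^ 2 / (n - 1) := by
  rw [entropyQuotient, log_inv, neg_sq]
  rcases eq_or_ne n 0 with rfl | hn
  · simp
  · rw [show 1 - n⁻¹ = (n - 1) / n by field_simp, div_div_eq_mul_div]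
    field_simp

theorem negMulLog_eq_sqrt_mul_sqrt_entropyQuotient {t : ℝ} (h0 : 0 ≤ t) (h1 : t ≤ 1) :
    negMulLog t = √(t * (1 - t)) * √(entropyQuotient t) := by
  have hsq : t * (1 - t) * entropyQuotient t = negMulLog t ^ 2 := by
    rcases eq_or_ne t 1 with rfl | ht
    · simp [entropyQuotient]
    · have : 1 - t ≠ 0 := sub_ne_zero.2 ht.symm
      rw [entropyQuotient, negMulLog]
      field_simp
  rw [← sqrt_mul (mul_nonneg h0 (sub_nonneg.2 h1)), hsq, sqrt_sq (negMulLog_nonneg h0 h1)]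

theorem entropyQuotient_eq_neg_mul_log_mul_dslope (t : ℝ) :
    entropyQuotient t = -(t * log t) * dslope log 1 t := by
  rcases eq_or_ne t 1 with rfl | ht
  · simp [entropyQuotient]
  · rw [dslope_of_ne _ ht, slope_def_field, entropyQuotient, log_one, sub_zero,
      ← neg_sub t 1, div_neg]
    ring

theorem entropyQuotient_eq_sq_div {t : ℝ} (ht : 0 ≤ t) :
    entropyQuotient t = (2 * (√t * log √t)) ^ 2 / (1 - t) := by
  rw [entropyQuotient, log_sqrt ht, mul_pow, mul_pow, sq_sqrt ht]
  ring

theorem continuousOn_entropyQuotient : ContinuousOn entropyQuotient (Icc 0 1) := by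
  intro t ⟨ht0, ht1⟩
  rcases ht1.lt_or_eq with ht1 | rfl
  · have hcont : ContinuousAt (fun t => (2 * (√t * log √t)) ^ 2 / (1 - t)) t :=
      ((continuous_mul_log.comp continuous_sqrt).continuousAt.const_mul 2).pow 2 |>.div
        (by fun_prop) (by linarith)
    exact (hcont.continuousWithinAt.congr (fun s hs => entropyQuotient_eq_sq_div hs.1)
      (entropyQuotient_eq_sq_div ht0)).mono fun _ hs => hs
  · have hdslope : ContinuousAt (dslope log 1) 1 :=
      continuousAt_dslope_same.mpr (differentiableAt_log one_ne_zero)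
    rw [funext entropyQuotient_eq_neg_mul_log_mul_dslope]
    exact ((continuous_mul_log.continuousAt.neg).mul hdslope).continuousWithinAt

theorem hasDerivAt_entropyQuotient {t : ℝ} (h0 : t ≠ 0) (h1 : 1 - t ≠ 0) :
    HasDerivAt entropyQuotient ((log t ^ 2 + 2 * log t * (1 - t)) / (1 - t) ^ 2) t := by
  have := ((hasDerivAt_id t).fun_mul ((hasDerivAt_log h0).fun_pow 2)).fun_div
    ((hasDerivAt_const t 1).fun_sub (hasDerivAt_id t)) h1
  refine this.congr_deriv ?_
  simp only [id]
  field_simp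
  ring

theorem hasDerivAt_deriv_entropyQuotient {t : ℝ} (h0 : t ≠ 0) (h1 : 1 - t ≠ 0) :
    HasDerivAt (fun s => (log s ^ 2 + 2 * log s * (1 - s)) / (1 - s) ^ 2)
      (2 * (log t - t + 1) * (t * log t - t + 1) / (t * (1 - t) ^ 3)) t := by
  have hlog := hasDerivAt_log h0
  have hsub := (hasDerivAt_const t (1 : ℝ)).fun_sub (hasDerivAt_id t)
  have := ((hlog.fun_pow 2).fun_add (((hasDerivAt_const t 2).fun_mul hlog).fun_mul hsub)).fun_div
    (hsub.fun_pow 2) (pow_ne_zero 2 h1)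
  refine this.congr_deriv ?_
  simp only [id]
  field_simp
  ring

theorem concaveOn_entropyQuotient : ConcaveOn ℝ (Icc 0 1) entropyQuotient := by
  refine concaveOn_of_hasDerivWithinAt2_nonpos (convex_Icc 0 1) continuousOn_entropyQuotient
    (f' := fun s => (log s ^ 2 + 2 * log s * (1 - s)) / (1 - s) ^ 2)
    (f'' := fun t => 2 * (log t - t + 1) * (t * log t - t + 1) / (t * (1 - t) ^ 3))
    (fun t ht => ?_) (fun t ht => ?_) (fun t ht => ?_) <;>
    rw [interior_Icc] at ht <;> obtain ⟨ht0, ht1⟩ := ht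
  · exact (hasDerivAt_entropyQuotient ht0.ne' (by linarith)).hasDerivWithinAt
  · exact (hasDerivAt_deriv_entropyQuotient ht0.ne' (by linarith)).hasDerivWithinAt
  · have hlog : log t - t + 1 ≤ 0 := by linarith [log_le_sub_one_of_pos ht0]
    have hmul_log : 0 ≤ t * log t - t + 1 := by
      have := mul_le_mul_of_nonneg_left (one_sub_inv_le_log_of_pos ht0) ht0.le
      rw [mul_one_sub, mul_inv_cancel₀ ht0.ne'] at this
      linarith
    have : 0 < t * (1 - t) ^ 3 := mul_pos ht0 (pow_pos (by linarith) 3)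
    exact div_nonpos_of_nonpos_of_nonneg
      (by nlinarith [mul_nonpos_of_nonpos_of_nonneg hlog hmul_log]) this.le

theorem entropy_le_cN_sqrt_e2_general (N : ℕ) (x : Fin N → ℝ)
    (hx : ∀ i, 0 ≤ x i) (hsum : ∑ i, x i = 1) :
    ∑ i, (-x i * Real.log (x i)) ≤
      Real.log N * Real.sqrt (2 * N / (N - 1)) *
        Real.sqrt (∑ p ∈ Finset.univ.filter (fun p : Fin N × Fin N => p.1 < p.2),
          x p.1 * x p.2) := by
  set e₂ := ∑ p ∈ univ.filter (fun p : Fin N × Fin N => p.1 < p.2), x p.1 * x p.2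
  have hx1 (i : Fin N) : x i ≤ 1 := hsum ▸ single_le_sum (fun j _ => hx j) (mem_univ i)
  have : Nonempty (Fin N) :=
    Fin.pos_iff_nonempty.mp (Nat.pos_of_ne_zero (by rintro rfl; simp at hsum))
  have hjensen := concaveOn_entropyQuotient.sum_map_le_card_mul fun i => ⟨hx i, hx1 i⟩
  rw [hsum, Fintype.card_fin, one_div, entropyQuotient_inv] at hjensen
  have he₂ : 0 ≤ e₂ := sum_nonneg fun p _ => mul_nonneg (hx _) (hx _)
  calc ∑ i, -x i * log (x i)
      = ∑ i, √(x i * (1 - x i)) * √(entropyQuotient (x i)) :=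
        sum_congr rfl fun i _ => negMulLog_eq_sqrt_mul_sqrt_entropyQuotient (hx i) (hx1 i)
    _ ≤ √(∑ i, x i * (1 - x i)) * √(∑ i, entropyQuotient (x i)) :=
        sum_sqrt_mul_sqrt_le _ (fun i => mul_nonneg (hx i) (sub_nonneg.2 (hx1 i)))
          fun i => entropyQuotient_nonneg (hx i) (hx1 i)
    _ ≤ √(2 * e₂) * √(N * (log N ^ 2 / (N - 1))) := by
        rw [sum_mul_one_sub_eq_two_mul_sum_lt hsum]
        gcongr
    _ = log N * √(2 * N / (N - 1)) * √e₂ := by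
        rw [← sqrt_mul (by positivity), show 2 * e₂ * (N * (log N ^ 2 / (N - 1))) =
          log N ^ 2 * (2 * N / (N - 1) * e₂) by ring, sqrt_mul (sq_nonneg _),
          sqrt_sq (log_natCast_nonneg N), sqrt_mul' _ he₂, mul_assoc]

theorem entropy_le_cN_sqrt_e2 (N : ℕ) (hN : 2 ≤ N) (x : Fin N → ℝ)
    (hx : ∀ i, 0 ≤ x i) (hsum : ∑ i, x i = 1) :
    ∑ i, (-x i * Real.log (x i)) ≤
      Real.log N * Real.sqrt (2 * N / (N - 1)) *
        Real.sqrt (∑ p ∈ Finset.univ.filter (fun p : Fin N × Fin N => p.1 < p.2),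
          x p.1 * x p.2) :=
  entropy_le_cN_sqrt_e2_general N x hx hsum
end

section
/- Let x₁,…,x_N be nonnegative reals with sum 1, N ≥ 2. Equality ∑ᵢ η(xᵢ) = log(N)·√(2N/(N-1))·√(∑_{i<j} xᵢxⱼ) holds if and only if either exactly one xᵢ equals 1 and the rest are 0, or all xᵢ equal 1/N. -/
open Finset Real

/-!
With `g x = x log² x / (1 - x)` (`entropyRatio`) one has `η(x)² = x (1 - x) g(x)` on `[0, 1)`,
so Cauchy–Schwarz gives `(∑ η(xᵢ))² ≤ (∑ xᵢ (1 - xᵢ)) ∑ g(xᵢ)`, and `∑ xᵢ (1 - xᵢ) = 2 e₂`.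
Since `g` is strictly concave on `[0, 1)`, Jensen gives `∑ g(xᵢ) ≤ N g(1/N) = N log² N / (N - 1)`,
strictly unless all `xᵢ` are equal. So at equality either some `xᵢ = 1`, which forces a pure
state, or all `xᵢ = 1/N`. Conversely both sides vanish at a pure state and equal `log N` at the
uniform one.
-/

noncomputable def entropyRatio (x : ℝ) : ℝ := x * log x ^ 2 / (1 - x)

lemma negMulLog_sq_eq_mul_entropyRatio {x : ℝ} (hx : x ≠ 1) :
    negMulLog x ^ 2 = x * (1 - x) * entropyRatio x := by
  have : 1 - x ≠ 0 := sub_ne_zero.mpr hx.symm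
  rw [entropyRatio, negMulLog]
  field_simp

lemma entropyRatio_nonneg {x : ℝ} (hx0 : 0 ≤ x) (hx1 : x ≤ 1) : 0 ≤ entropyRatio x :=
  div_nonneg (by positivity) (sub_nonneg.mpr hx1)

lemma entropyRatio_inv (y : ℝ) : entropyRatio y⁻¹ = log y ^ 2 / (y - 1) := by
  rcases eq_or_ne y 0 with rfl | hy0
  · simp [entropyRatio]
  rcases eq_or_ne y 1 with rfl | hy1
  · simp [entropyRatio]
  have : y - 1 ≠ 0 := sub_ne_zero.mpr hy1
  rw [entropyRatio, log_inv, neg_sq]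
  field_simp

lemma hasDerivAt_entropyRatio {x : ℝ} (hx0 : x ≠ 0) (hx1 : x ≠ 1) :
    HasDerivAt entropyRatio ((log x ^ 2 + 2 * log x * (1 - x)) / (1 - x) ^ 2) x := by
  have h : 1 - x ≠ 0 := sub_ne_zero.mpr hx1.symm
  refine (((hasDerivAt_id' x).fun_mul ((hasDerivAt_log hx0).fun_pow 2)).fun_div
    ((hasDerivAt_id' x).const_sub 1) h).congr_deriv ?_
  field_simp
  ring

lemma hasDerivAt_deriv_entropyRatio {x : ℝ} (hx0 : x ≠ 0) (hx1 : x ≠ 1) :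
    HasDerivAt (fun y ↦ (log y ^ 2 + 2 * log y * (1 - y)) / (1 - y) ^ 2)
      (2 * (log x - x + 1) * (x * log x - x + 1) / (x * (1 - x) ^ 3)) x := by
  have h : 1 - x ≠ 0 := sub_ne_zero.mpr hx1.symm
  have hlog := hasDerivAt_log hx0
  have hsub := (hasDerivAt_id' x).const_sub 1
  refine (((hlog.fun_pow 2).fun_add ((hlog.const_mul 2).fun_mul hsub)).fun_div (hsub.fun_pow 2)
    (pow_ne_zero 2 h)).congr_deriv ?_
  field_simp
  ring

lemma deriv2_entropyRatio_neg {x : ℝ} (hx : x ∈ Set.Ioo 0 1) : deriv^[2] entropyRatio x < 0 := by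
  obtain ⟨hx0, hx1⟩ := hx
  have hderiv : deriv entropyRatio =ᶠ[nhds x]
      fun y ↦ (log y ^ 2 + 2 * log y * (1 - y)) / (1 - y) ^ 2 := by
    filter_upwards [isOpen_Ioo.mem_nhds ⟨hx0, hx1⟩] with y hy
    exact (hasDerivAt_entropyRatio hy.1.ne' hy.2.ne).deriv
  rw [Function.iterate_succ_apply, Function.iterate_one, hderiv.deriv_eq,
    (hasDerivAt_deriv_entropyRatio hx0.ne' hx1.ne).deriv]
  have hlog : log x - x + 1 < 0 := by linarith [log_lt_sub_one_of_pos hx0 hx1.ne]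
  have hmul_log : 0 < x * log x - x + 1 := by linarith [self_sub_one_lt_mul_log hx0.le hx1.ne]
  have hden : 0 < x * (1 - x) ^ 3 := mul_pos hx0 (pow_pos (sub_pos.mpr hx1) 3)
  exact div_neg_of_neg_of_pos (by nlinarith) hden

lemma continuousOn_entropyRatio : ContinuousOn entropyRatio (Set.Ico 0 1) := by
  -- `x log² x = 4 (√x log √x)²` exhibits continuity at `0`.
  have hcont : ContinuousOn (fun x ↦ 4 * (√x * log √x) ^ 2 / (1 - x)) (Set.Ico 0 1) :=
    ((continuous_const.mul ((continuous_mul_log.comp continuous_sqrt).pow 2)).continuousOn).div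
      (continuous_const.sub continuous_id).continuousOn fun y hy ↦ (sub_pos.mpr hy.2).ne'
  refine hcont.congr fun y hy ↦ ?_
  dsimp only
  rw [entropyRatio, log_sqrt hy.1, mul_pow, sq_sqrt hy.1]
  ring

lemma strictConcaveOn_entropyRatio : StrictConcaveOn ℝ (Set.Ico 0 1) entropyRatio :=
  strictConcaveOn_of_deriv2_neg (convex_Ico 0 1) continuousOn_entropyRatio fun _ hx ↦
    deriv2_entropyRatio_neg (interior_Ico (a := (0:ℝ)) ▸ hx)

lemma two_mul_sum_filter_fst_lt_snd {ι R : Type*} [Fintype ι] [LinearOrder ι] [CommRing R]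
    (x : ι → R) :
    2 * ∑ p ∈ univ.filter (fun p : ι × ι ↦ p.1 < p.2), x p.1 * x p.2 =
      (∑ i, x i) ^ 2 - ∑ i, x i ^ 2 := by
  have hswap : ∑ p ∈ univ.filter (fun p : ι × ι ↦ p.2 < p.1), x p.1 * x p.2 =
      ∑ p ∈ univ.filter (fun p : ι × ι ↦ p.1 < p.2), x p.1 * x p.2 :=
    sum_nbij' Prod.swap Prod.swap (by simp) (by simp) (by simp) (by simp) (by simp [mul_comm])
  have hdiag : ∑ p ∈ univ.filter (fun p : ι × ι ↦ p.1 = p.2), x p.1 * x p.2 = ∑ i, x i ^ 2 :=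
    sum_nbij' Prod.fst (fun i ↦ (i, i)) (by simp) (by simp) (by simp) (by simp) (by simp [sq])
  have htrichotomy : ∀ p : ι × ι,
      x p.1 * x p.2 = (if p.1 < p.2 then x p.1 * x p.2 else 0) +
        (if p.2 < p.1 then x p.1 * x p.2 else 0) + (if p.1 = p.2 then x p.1 * x p.2 else 0) := by
    rintro ⟨a, b⟩
    rcases lt_trichotomy a b with h | rfl | h
    · simp [h, h.ne, h.not_gt]
    · simp
    · simp [h, h.ne', h.not_gt]
  have htotal : (∑ i, x i) ^ 2 = ∑ p ∈ univ.filter (fun p : ι × ι ↦ p.1 < p.2), x p.1 * x p.2 +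
      ∑ p ∈ univ.filter (fun p : ι × ι ↦ p.2 < p.1), x p.1 * x p.2 +
      ∑ p ∈ univ.filter (fun p : ι × ι ↦ p.1 = p.2), x p.1 * x p.2 := by
    rw [sq, sum_mul_sum, ← Fintype.sum_prod_type', sum_filter, sum_filter, sum_filter,
      ← sum_add_distrib, ← sum_add_distrib]
    exact sum_congr rfl fun p _ ↦ htrichotomy p
  rw [htotal, hswap, hdiag]
  ring

section ProbabilityVector

variable {ι : Type*} [Fintype ι] {x : ι → ℝ}

lemma le_one_of_sum_eq_one (hx : ∀ i, 0 ≤ x i) (hsum : ∑ i, x i = 1) (i : ι) : x i ≤ 1 :=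
  hsum ▸ single_le_sum (fun j _ ↦ hx j) (mem_univ i)

lemma eq_zero_of_ne_of_eq_one (hx : ∀ i, 0 ≤ x i) (hsum : ∑ i, x i = 1) {i j : ι}
    (hi : x i = 1) (hji : j ≠ i) : x j = 0 := by
  classical
  have : x i + x j ≤ 1 := by
    rw [← sum_pair hji.symm, ← hsum]
    exact sum_le_univ_sum_of_nonneg fun k ↦ hx k
  linarith [hx j]

lemma exists_ne_of_ne_one_div_card (hsum : ∑ i, x i = 1) {i : ι}
    (hi : x i ≠ 1 / Fintype.card ι) : ∃ j, x j ≠ x i := by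
  by_contra! hconst
  rw [sum_congr rfl fun j _ ↦ hconst j, sum_const, card_univ, nsmul_eq_mul] at hsum
  exact hi (eq_one_div_of_mul_eq_one_right hsum)

lemma sum_mul_one_sub_eq_two_mul [LinearOrder ι] (hsum : ∑ i, x i = 1) :
    ∑ i, x i * (1 - x i) =
      2 * ∑ p ∈ univ.filter (fun p : ι × ι ↦ p.1 < p.2), x p.1 * x p.2 := by
  rw [two_mul_sum_filter_fst_lt_snd, hsum]
  simp only [mul_one_sub, sum_sub_distrib, hsum, sq]
  ring

lemma sum_entropyRatio_lt (hx : ∀ i, x i ∈ Set.Ico 0 1) (hsum : ∑ i, x i = 1)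
    (hne : ∃ i j, x i ≠ x j) :
    ∑ i, entropyRatio (x i) < Fintype.card ι * entropyRatio (Fintype.card ι)⁻¹ := by
  obtain ⟨i, j, hij⟩ := hne
  have hcard : (0 : ℝ) < Fintype.card ι := Nat.cast_pos.mpr (Fintype.card_pos_iff.mpr ⟨i⟩)
  have hjensen := strictConcaveOn_entropyRatio.lt_map_sum (t := univ)
    (w := fun _ ↦ (Fintype.card ι : ℝ)⁻¹) (p := x) (fun _ _ ↦ inv_pos.mpr hcard)
    (by simp [card_univ, hcard.ne']) (fun k _ ↦ hx k) ⟨i, mem_univ i, j, mem_univ j, hij⟩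
  simp only [smul_eq_mul, ← mul_sum, hsum, mul_one] at hjensen
  rwa [inv_mul_lt_iff₀ hcard] at hjensen

theorem sq_sum_negMulLog_lt (hx : ∀ i, x i ∈ Set.Ico 0 1) (hsum : ∑ i, x i = 1)
    (hne : ∃ i j, x i ≠ x j) :
    (∑ i, negMulLog (x i)) ^ 2 < (∑ i, x i * (1 - x i)) *
      (Fintype.card ι * (log (Fintype.card ι) ^ 2 / (Fintype.card ι - 1))) := by
  have hvar_pos : 0 < ∑ i, x i * (1 - x i) := by
    obtain ⟨i, j, hij⟩ := hne
    obtain ⟨k, hk⟩ : ∃ k, x k ≠ 0 := by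
      by_contra! h
      exact hij (by rw [h i, h j])
    exact sum_pos' (fun l _ ↦ mul_nonneg (hx l).1 (sub_nonneg.mpr (hx l).2.le))
      ⟨k, mem_univ k, mul_pos ((hx k).1.lt_of_ne' hk) (sub_pos.mpr (hx k).2)⟩
  calc (∑ i, negMulLog (x i)) ^ 2
      ≤ (∑ i, x i * (1 - x i)) * ∑ i, entropyRatio (x i) :=
        sum_sq_le_sum_mul_sum_of_sq_le_mul univ
          (fun i _ ↦ mul_nonneg (hx i).1 (sub_nonneg.mpr (hx i).2.le))
          (fun i _ ↦ entropyRatio_nonneg (hx i).1 (hx i).2.le)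
          (fun i _ ↦ (negMulLog_sq_eq_mul_entropyRatio (hx i).2.ne).le)
    _ < _ := by
        rw [← entropyRatio_inv]
        exact mul_lt_mul_of_pos_left (sum_entropyRatio_lt hx hsum hne) hvar_pos

lemma forall_eq_one_div_card_of_sq_sum_negMulLog_eq (hx : ∀ i, x i ∈ Set.Ico 0 1)
    (hsum : ∑ i, x i = 1)
    (heq : (∑ i, negMulLog (x i)) ^ 2 = (∑ i, x i * (1 - x i)) *
      (Fintype.card ι * (log (Fintype.card ι) ^ 2 / (Fintype.card ι - 1)))) (i : ι) :
    x i = 1 / Fintype.card ι := by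
  by_contra hi
  obtain ⟨j, hj⟩ := exists_ne_of_ne_one_div_card hsum hi
  exact (sq_sum_negMulLog_lt hx hsum ⟨j, i, hj⟩).ne heq

lemma sum_negMulLog_eq_zero_of_forall_eq_zero_or_eq_one (h : ∀ i, x i = 0 ∨ x i = 1) :
    ∑ i, negMulLog (x i) = 0 :=
  sum_eq_zero fun i _ ↦ by rcases h i with h | h <;> simp [h]

lemma sum_mul_one_sub_eq_zero_of_forall_eq_zero_or_eq_one (h : ∀ i, x i = 0 ∨ x i = 1) :
    ∑ i, x i * (1 - x i) = 0 :=
  sum_eq_zero fun i _ ↦ by rcases h i with h | h <;> simp [h]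

lemma sum_negMulLog_of_forall_eq_one_div_card (h : ∀ i, x i = 1 / Fintype.card ι) :
    ∑ i, negMulLog (x i) = log (Fintype.card ι) := by
  rcases isEmpty_or_nonempty ι with hι | hι
  · simp
  simp only [h, sum_const, card_univ, nsmul_eq_mul, negMulLog, one_div, log_inv]
  field_simp

lemma sum_mul_one_sub_of_forall_eq_one_div_card [Nonempty ι] (h : ∀ i, x i = 1 / Fintype.card ι) :
    ∑ i, x i * (1 - x i) = 1 - 1 / Fintype.card ι := by
  simp only [h, sum_const, card_univ, nsmul_eq_mul]
  field_simp

end ProbabilityVector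

theorem entropy_eq_cN_sqrt_e2_iff (N : ℕ) (hN : 2 ≤ N) (x : Fin N → ℝ)
    (hx : ∀ i, 0 ≤ x i) (hsum : ∑ i, x i = 1) :
    (∑ i, (-x i * Real.log (x i)) =
      Real.log N * Real.sqrt (2 * N / (N - 1)) *
        Real.sqrt (∑ p ∈ Finset.univ.filter (fun p : Fin N × Fin N => p.1 < p.2),
          x p.1 * x p.2)) ↔
    ((∃ i, x i = 1 ∧ ∀ j, j ≠ i → x j = 0) ∨ (∀ i, x i = 1 / N)) := by
  have hN1 : (1 : ℝ) < N := by exact_mod_cast hN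
  set e2 := ∑ p ∈ Finset.univ.filter (fun p : Fin N × Fin N => p.1 < p.2), x p.1 * x p.2
  have hvar : ∑ i, x i * (1 - x i) = 2 * e2 := sum_mul_one_sub_eq_two_mul hsum
  change ∑ i, negMulLog (x i) = _ ↔ _
  constructor
  · intro heq
    by_cases hpure : ∃ i, x i = 1
    · obtain ⟨i, hi⟩ := hpure
      exact Or.inl ⟨i, hi, fun j hj ↦ eq_zero_of_ne_of_eq_one hx hsum hi hj⟩
    push Not at hpure
    have hx' : ∀ k, x k ∈ Set.Ico 0 1 :=
      fun k ↦ ⟨hx k, (le_one_of_sum_eq_one hx hsum k).lt_of_ne (hpure k)⟩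
    have huniform := forall_eq_one_div_card_of_sq_sum_negMulLog_eq hx' hsum <| by
      rw [heq, mul_pow, mul_pow, sq_sqrt (by positivity),
        sq_sqrt (sum_nonneg fun p _ ↦ mul_nonneg (hx _) (hx _)), hvar, Fintype.card_fin]
      ring
    exact Or.inr fun i ↦ by simpa using huniform i
  · rintro (⟨i, hi, hzero⟩ | hunif)
    · have hvertex : ∀ j, x j = 0 ∨ x j = 1 := fun j ↦
        (eq_or_ne j i).elim (fun h ↦ Or.inr (h ▸ hi)) (fun h ↦ Or.inl (hzero j h))
      have he2 : e2 = 0 := by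
        linarith [sum_mul_one_sub_eq_zero_of_forall_eq_zero_or_eq_one hvertex]
      rw [sum_negMulLog_eq_zero_of_forall_eq_zero_or_eq_one hvertex, he2, sqrt_zero, mul_zero]
    · have hunif' : ∀ i, x i = 1 / Fintype.card (Fin N) := by simpa using hunif
      have : Nonempty (Fin N) := ⟨⟨0, by omega⟩⟩
      have he2 : e2 = (2 * N / (N - 1 : ℝ))⁻¹ := by
        rw [sum_mul_one_sub_of_forall_eq_one_div_card hunif', Fintype.card_fin] at hvar
        rw [inv_div]
        field_simp at hvar ⊢
        linarith
      rw [sum_negMulLog_of_forall_eq_one_div_card hunif', Fintype.card_fin, he2, mul_assoc,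
        ← sqrt_mul (by positivity), mul_inv_cancel₀ (by positivity : 2 * (N : ℝ) / (N - 1) ≠ 0),
        sqrt_one, mul_one]
end

section
/- The function (x₁,…,x_N) ↦ ∑ᵢ η(xᵢ) - η(∑ᵢ xᵢ) is concave on the cone of nonnegative real N-tuples, where η(t) = -t·log t with η(0)=0. -/
open Real Finset

/-!
After the rewriting `∑ᵢ η(xᵢ) - η(S) = ∑ᵢ (xᵢ log S - xᵢ log xᵢ)` with `S = ∑ᵢ xᵢ`, each summand
is a jointly concave function of `(xᵢ, S)` composed with a linear map. Joint concavity of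
`(x, S) ↦ x log S - x log x` on `0 ≤ x ≤ S` holds because, by `log y ≤ y - 1`, it is the infimum
over `t > 0` of the affine functions `S / t + x log t - x`, attained at `t = S / x`.
-/

theorem concaveOn_finset_sum {𝕜 E β ι : Type*} [Semiring 𝕜] [PartialOrder 𝕜] [AddCommMonoid E]
    [AddCommMonoid β] [PartialOrder β] [IsOrderedAddMonoid β] [SMul 𝕜 E] [Module 𝕜 β]
    {s : Set E} {t : Finset ι} {f : ι → E → β} (hs : Convex 𝕜 s)
    (hf : ∀ i ∈ t, ConcaveOn 𝕜 s (f i)) : ConcaveOn 𝕜 s fun x => ∑ i ∈ t, f i x := by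
  classical
  induction t using Finset.induction_on with
  | empty => simpa using concaveOn_const (0 : β) hs
  | insert i t hi ih =>
    simp only [sum_insert hi]
    exact (hf i (mem_insert_self i t)).add (ih fun j hj => hf j (mem_insert_of_mem hj))

theorem mul_log_sub_mul_log_le {x S t : ℝ} (hx : 0 ≤ x) (hxS : x ≤ S) (ht : 0 < t) :
    x * log S - x * log x ≤ S / t + x * log t - x := by
  rcases hx.eq_or_lt with rfl | hx
  · simpa using div_nonneg hxS ht.le
  have hS : 0 < S := hx.trans_le hxS
  have h := log_le_sub_one_of_pos (show 0 < S / (x * t) by positivity)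
  rw [log_div hS.ne' (by positivity), log_mul hx.ne' ht.ne'] at h
  have h' := mul_le_mul_of_nonneg_left h hx.le
  have hcancel : x * (S / (x * t)) = S / t := by field_simp
  linarith [mul_sub x (S / (x * t)) 1]

theorem concaveOn_mul_log_sub_mul_log :
    ConcaveOn ℝ {p : ℝ × ℝ | 0 ≤ p.1 ∧ p.1 ≤ p.2} fun p => p.1 * log p.2 - p.1 * log p.1 := by
  refine ⟨?_, ?_⟩
  · rintro ⟨x₁, S₁⟩ ⟨hx₁, hxS₁⟩ ⟨x₂, S₂⟩ ⟨hx₂, hxS₂⟩ a b ha hb -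
    simp only [Set.mem_ofPred_eq, Prod.smul_mk, Prod.mk_add_mk, smul_eq_mul]
    constructor
    · positivity
    · gcongr
  rintro ⟨x₁, S₁⟩ ⟨hx₁, hxS₁⟩ ⟨x₂, S₂⟩ ⟨hx₂, hxS₂⟩ a b ha hb hab
  simp only [Prod.smul_mk, Prod.mk_add_mk, smul_eq_mul]
  set x := a * x₁ + b * x₂
  set S := a * S₁ + b * S₂
  rcases (show 0 ≤ x by positivity).eq_or_lt with hx | hx
  · obtain ⟨h₁, h₂⟩ := (add_eq_zero_iff_of_nonneg (by positivity) (by positivity)).1 hx.symm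
    rw [← hx]
    linear_combination (log S₁ - log x₁) * h₁ + (log S₂ - log x₂) * h₂
  have hS : 0 < S :=
    hx.trans_le (add_le_add (mul_le_mul_of_nonneg_left hxS₁ ha) (mul_le_mul_of_nonneg_left hxS₂ hb))
  set t := S / x
  have ht : 0 < t := div_pos hS hx
  calc a * (x₁ * log S₁ - x₁ * log x₁) + b * (x₂ * log S₂ - x₂ * log x₂)
      ≤ a * (S₁ / t + x₁ * log t - x₁) + b * (S₂ / t + x₂ * log t - x₂) :=
        add_le_add (mul_le_mul_of_nonneg_left (mul_log_sub_mul_log_le hx₁ hxS₁ ht) ha)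
          (mul_le_mul_of_nonneg_left (mul_log_sub_mul_log_le hx₂ hxS₂ ht) hb)
    _ = S / t + x * log t - x := by ring
    _ = x * log S - x * log x := by
        rw [div_div_cancel₀ hS.ne', log_div hS.ne' hx.ne']
        ring

theorem S1_concave (N : ℕ) :
    ConcaveOn ℝ {x : Fin N → ℝ | ∀ i, 0 ≤ x i}
      (fun x => (∑ i, (-x i * Real.log (x i))) -
        (-(∑ i, x i) * Real.log (∑ i, x i))) := by
  have hcone : Convex ℝ {x : Fin N → ℝ | ∀ i, 0 ≤ x i} := convex_Ici (0 : Fin N → ℝ)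
  have hterm (i : Fin N) : ConcaveOn ℝ {x : Fin N → ℝ | ∀ i, 0 ≤ x i}
      fun x => x i * log (∑ j, x j) - x i * log (x i) := by
    let ℓ : (Fin N → ℝ) →ₗ[ℝ] ℝ × ℝ := (LinearMap.proj i).prod (∑ j, LinearMap.proj j)
    have hℓ (x : Fin N → ℝ) : ℓ x = (x i, ∑ j, x j) := by simp [ℓ]
    refine ((concaveOn_mul_log_sub_mul_log.comp_linearMap ℓ).subset ?_ hcone).congr fun x _ => ?_
    · intro x (hx : ∀ i, 0 ≤ x i)
      simp only [Set.mem_preimage, hℓ, Set.mem_ofPred_eq]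
      exact ⟨hx i, single_le_sum (fun j _ => hx j) (mem_univ i)⟩
    · simp only [Function.comp_apply, hℓ]
  refine (concaveOn_finset_sum (t := univ) hcone fun i _ => hterm i).congr fun x _ => ?_
  simp only [sum_sub_distrib, ← sum_mul, neg_mul, sum_neg_distrib]
  ring
end

section
/- The function (x₁,…,x_N) ↦ √(∑_{i<j} xᵢxⱼ) is super-additive on nonnegative N-tuples: √(e₂(x+y)) ≥ √(e₂(x)) + √(e₂(y)). -/
/-!
Write `S x = ∑ xᵢ`. Polarizing, `e₂(x + y) = e₂(x) + e₂(y) + c` with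
`c = S x · S y - ⟨x, y⟩ = ∑_{i ≠ j} xᵢ yⱼ ≥ 0`, and `2 e₂(x) = (S x)² - ‖x‖²` is the Lorentzian
quadratic form evaluated at the future-pointing vector `(S x, x)`. Aczél's inequality, the
reverse Cauchy–Schwarz inequality for that form, gives `4 e₂(x) e₂(y) ≤ c²`, i.e.
`2 √(e₂(x) e₂(y)) ≤ c`, which is `(√e₂(x) + √e₂(y))² ≤ e₂(x + y)`.
-/

open Finset RealInnerProductSpace

theorem aczel_inequality {E : Type*} [NormedAddCommGroup E] [InnerProductSpace ℝ E]
    {a b : ℝ} {u v : E} (hu : ‖u‖ ^ 2 ≤ a ^ 2) (hv : ‖v‖ ^ 2 ≤ b ^ 2) :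
    (a ^ 2 - ‖u‖ ^ 2) * (b ^ 2 - ‖v‖ ^ 2) ≤ (a * b - ⟪u, v⟫) ^ 2 := by
  have hcross : 0 ≤ b ^ 2 * ‖u‖ ^ 2 - 2 * (a * b) * ⟪u, v⟫ + a ^ 2 * ‖v‖ ^ 2 := by
    have h := norm_sub_sq_real (b • u) (a • v)
    rw [norm_smul, norm_smul, real_inner_smul_left, real_inner_smul_right, mul_pow, mul_pow,
      Real.norm_eq_abs, Real.norm_eq_abs, sq_abs, sq_abs] at h
    nlinarith [sq_nonneg ‖b • u - a • v‖]
  set P := a ^ 2 - ‖u‖ ^ 2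
  set Q := b ^ 2 - ‖v‖ ^ 2
  set R := a * b - ⟪u, v⟫
  have hP : 0 ≤ P := sub_nonneg.2 hu
  have hQ : 0 ≤ Q := sub_nonneg.2 hv
  have hmixed : b ^ 2 * P + a ^ 2 * Q ≤ 2 * (a * b) * R := by linarith
  rcases eq_or_ne (a * b) 0 with hab | hab
  · have hPQ : P * Q = 0 := by
      rcases mul_eq_zero.1 hab with rfl | rfl <;> nlinarith [mul_nonneg hP hQ]
    rw [hPQ]
    positivity
  · -- AM–GM bounds `b² P + a² Q` from below by `2 |a b| √(P Q)`.
    refine le_of_mul_le_mul_left ?_ (by positivity : 0 < 4 * (a * b) ^ 2)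
    calc 4 * (a * b) ^ 2 * (P * Q) ≤ (b ^ 2 * P + a ^ 2 * Q) ^ 2 := by
          nlinarith [sq_nonneg (b ^ 2 * P - a ^ 2 * Q)]
      _ ≤ (2 * (a * b) * R) ^ 2 := pow_le_pow_left₀ (by positivity) hmixed 2
      _ = 4 * (a * b) ^ 2 * R ^ 2 := by ring

theorem aczel_inequality_sum {ι : Type*} [Fintype ι] {a b : ℝ} {u v : ι → ℝ}
    (hu : ∑ i, u i ^ 2 ≤ a ^ 2) (hv : ∑ i, v i ^ 2 ≤ b ^ 2) :
    (a ^ 2 - ∑ i, u i ^ 2) * (b ^ 2 - ∑ i, v i ^ 2) ≤ (a * b - ∑ i, u i * v i) ^ 2 := by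
  have hnorm (w : ι → ℝ) : ‖WithLp.toLp 2 w‖ ^ 2 = ∑ i, w i ^ 2 :=
    EuclideanSpace.real_norm_sq_eq _
  have hinner : ⟪WithLp.toLp 2 u, WithLp.toLp 2 v⟫ = ∑ i, u i * v i := by
    simp [EuclideanSpace.inner_toLp_toLp, dotProduct, mul_comm]
  have h := aczel_inequality (a := a) (b := b) (u := WithLp.toLp 2 u) (v := WithLp.toLp 2 v)
    (by rwa [hnorm]) (by rwa [hnorm])
  rwa [hnorm, hnorm, hinner] at h

section LinearOrder

variable {ι : Type*} [Fintype ι] [LinearOrder ι]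

theorem sum_lt_pairs_add_sum_diag {M : Type*} [AddCommMonoid M] (f : ι → ι → M) :
    ∑ p ∈ univ.filter (fun p : ι × ι => p.1 < p.2), (f p.1 p.2 + f p.2 p.1) + ∑ i, f i i
      = ∑ i, ∑ j, f i j := by
  rw [← Fintype.sum_prod_type', sum_add_distrib]
  have hswap : ∑ p ∈ univ.filter (fun p : ι × ι => p.1 < p.2), f p.2 p.1
      = ∑ p ∈ univ.filter (fun p : ι × ι => p.2 < p.1), f p.1 p.2 :=
    sum_nbij' Prod.swap Prod.swap (by simp) (by simp) (by simp) (by simp) (by simp)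
  have hdiag : ∑ i, f i i = ∑ p ∈ univ.filter (fun p : ι × ι => p.1 = p.2), f p.1 p.2 :=
    sum_nbij' (fun i => (i, i)) Prod.fst (by simp) (by simp) (by simp)
      (by simp +contextual [Prod.ext_iff]) (by simp)
  rw [hswap, hdiag, ← sum_filter_add_sum_filter_not univ (fun p : ι × ι => p.1 < p.2),
    add_assoc, ← sum_union (disjoint_filter.2 fun p _ h => h.ne'), ← filter_or]
  congr 2
  ext p
  simp [not_lt, le_iff_lt_or_eq, eq_comm]

theorem sum_lt_pairs_mul_add_mul {R : Type*} [CommRing R] (x y : ι → R) :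
    ∑ p ∈ univ.filter (fun p : ι × ι => p.1 < p.2), (x p.1 * y p.2 + x p.2 * y p.1)
      = (∑ i, x i) * (∑ i, y i) - ∑ i, x i * y i := by
  rw [sum_mul_sum, ← sum_lt_pairs_add_sum_diag fun i j => x i * y j, add_sub_cancel_right]

def esymm2 {R : Type*} [CommSemiring R] (x : ι → R) : R :=
  ∑ p ∈ univ.filter (fun p : ι × ι => p.1 < p.2), x p.1 * x p.2

theorem esymm2_nonneg {R : Type*} [CommSemiring R] [PartialOrder R] [IsOrderedRing R]
    {x : ι → R} (hx : ∀ i, 0 ≤ x i) : 0 ≤ esymm2 x :=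
  sum_nonneg fun _ _ => mul_nonneg (hx _) (hx _)

theorem two_mul_esymm2 {R : Type*} [CommRing R] (x : ι → R) :
    2 * esymm2 x = (∑ i, x i) ^ 2 - ∑ i, x i ^ 2 := by
  simp only [sq]
  rw [← sum_lt_pairs_mul_add_mul, esymm2, mul_sum]
  exact sum_congr rfl fun _ _ => by ring

theorem esymm2_add {R : Type*} [CommRing R] (x y : ι → R) :
    esymm2 (x + y) = esymm2 x + esymm2 y + ((∑ i, x i) * (∑ i, y i) - ∑ i, x i * y i) := by
  simp only [esymm2, ← sum_lt_pairs_mul_add_mul, ← sum_add_distrib, Pi.add_apply]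
  exact sum_congr rfl fun _ _ => by ring

theorem four_mul_esymm2_mul_esymm2_le {x y : ι → ℝ} (hx : ∀ i, 0 ≤ x i) (hy : ∀ i, 0 ≤ y i) :
    4 * esymm2 x * esymm2 y ≤ ((∑ i, x i) * (∑ i, y i) - ∑ i, x i * y i) ^ 2 := by
  have h2x := two_mul_esymm2 x
  have h2y := two_mul_esymm2 y
  have h := aczel_inequality_sum (a := ∑ i, x i) (b := ∑ i, y i) (u := x) (v := y)
    (by linarith [esymm2_nonneg hx]) (by linarith [esymm2_nonneg hy])
  rw [← h2x, ← h2y] at h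
  linarith

end LinearOrder

theorem Real.sqrt_add_sqrt_le_sqrt_add_add {a b c : ℝ} (ha : 0 ≤ a) (hb : 0 ≤ b) (hc : 0 ≤ c)
    (h : 4 * a * b ≤ c ^ 2) : √a + √b ≤ √(a + b + c) := by
  have hgeom : 2 * (√a * √b) ≤ c := by
    refine (pow_le_pow_iff_left₀ (by positivity) hc two_ne_zero).1 ?_
    rw [mul_pow, mul_pow, sq_sqrt ha, sq_sqrt hb]
    linarith
  rw [Real.le_sqrt (by positivity) (by positivity), add_sq, sq_sqrt ha, sq_sqrt hb]
  linarith

theorem sqrt_e2_superadditive (N : ℕ) (x y : Fin N → ℝ)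
    (hx : ∀ i, 0 ≤ x i) (hy : ∀ i, 0 ≤ y i) :
    Real.sqrt (∑ p ∈ Finset.univ.filter
        (fun p : Fin N × Fin N => p.1 < p.2), x p.1 * x p.2) +
    Real.sqrt (∑ p ∈ Finset.univ.filter
        (fun p : Fin N × Fin N => p.1 < p.2), y p.1 * y p.2) ≤
    Real.sqrt (∑ p ∈ Finset.univ.filter
        (fun p : Fin N × Fin N => p.1 < p.2), (x p.1 + y p.1) * (x p.2 + y p.2)) := by
  change √(esymm2 x) + √(esymm2 y) ≤ √(esymm2 (x + y))
  have hcross : 0 ≤ (∑ i, x i) * (∑ i, y i) - ∑ i, x i * y i := by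
    rw [← sum_lt_pairs_mul_add_mul]
    exact sum_nonneg fun p _ =>
      add_nonneg (mul_nonneg (hx p.1) (hy p.2)) (mul_nonneg (hx p.2) (hy p.1))
  rw [esymm2_add]
  exact Real.sqrt_add_sqrt_le_sqrt_add_add (esymm2_nonneg hx) (esymm2_nonneg hy) hcross
    (four_mul_esymm2_mul_esymm2_le hx hy)
end

section
/- Let x₁,…,x_N be positive reals with x = ∑ xᵢ, N ≥ 2. If the ratios (log x - log x_m)/(x - x_m) are equal for all m = 1,…,N, then all x_m are equal (and hence x_m = x/N). -/
theorem critical_point_all_equal (N : ℕ) (hN : 2 ≤ N) (x : Fin N → ℝ)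
    (hx : ∀ i, 0 < x i) (c : ℝ)
    (hc : ∀ m, (Real.log (∑ i, x i) - Real.log (x m)) / ((∑ i, x i) - x m) = c) :
    ∀ m, x m = (∑ i, x i) / N := by
  set S := ∑ i, x i with hSdef
  have hNpos : 0 < N := by omega
  have hlt : ∀ m, x m < S := by
    intro m
    have : x m + ∑ i ∈ Finset.univ.erase m, x i = S := by
      rw [hSdef, Finset.add_sum_erase _ _ (Finset.mem_univ m)]
    have hpos : 0 < ∑ i ∈ Finset.univ.erase m, x i := by
      apply Finset.sum_pos (fun i _ => hx i)
      haveI : Nontrivial (Fin N) := Fin.nontrivial_iff_two_le.2 hN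
      obtain ⟨j, hj⟩ := exists_ne m
      exact ⟨j, Finset.mem_erase.2 ⟨hj, Finset.mem_univ j⟩⟩
    linarith
  have hSpos : 0 < S := lt_trans (hx ⟨0, hNpos⟩) (hlt ⟨0, hNpos⟩)
  have heq : ∀ i j, x i = x j := by
    have key : ∀ i j : Fin N, x i < x j → False := by
      intro i j hij
      have h := strictConcaveOn_log_Ioi.secant_strict_mono (a := S)
        (Set.mem_Ioi.2 hSpos) (Set.mem_Ioi.2 (hx i)) (Set.mem_Ioi.2 (hx j))
        (ne_of_lt (hlt i)) (ne_of_lt (hlt j)) hij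
      have e1 : (Real.log (x j) - Real.log S) / (x j - S)
          = (Real.log S - Real.log (x j)) / (S - x j) := by
        rw [← neg_div_neg_eq]; ring_nf
      have e2 : (Real.log (x i) - Real.log S) / (x i - S)
          = (Real.log S - Real.log (x i)) / (S - x i) := by
        rw [← neg_div_neg_eq]; ring_nf
      rw [e1, e2, hc i, hc j] at h
      exact lt_irrefl c h
    intro i j
    rcases lt_trichotomy (x i) (x j) with h | h | h
    · exact absurd h (fun h => key i j h)
    · exact h
    · exact absurd h (fun h => key j i h)
  intro m
  have hsum : S = N * x m := by
    rw [hSdef, Finset.sum_congr rfl (fun i _ => heq i m)]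
    simp [Finset.card_univ, mul_comm]
  rw [hsum]
  field_simp
end

section
/- Let x₁,…,x_N be nonnegative reals, not all zero, with at most k of them nonzero (k ≥ 2). Then ∑ᵢ η(xᵢ) - η(∑ᵢ xᵢ) ≤ log(k)·√(2k/(k-1))·√(∑_{i<j} xᵢxⱼ), where η(t) = -t·log t. -/
/-!
With `s = ∑ xᵢ`, the left-hand side is `∑ xᵢ (log s - log xᵢ)`. Cauchy–Schwarz with the weights
`xᵢ (s - xᵢ)`, which sum to `2 e₂`, bounds its square by `2 e₂ ∑ G (xᵢ / s)`, where
`G p = p log² p / (1 - p)`. Since `G` is concave on `[0, 1]` with `G 0 = 0`, Jensen's inequality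
over the at most `k` nonzero coordinates, padded with zeros, gives
`∑ G (xᵢ / s) ≤ k G (1 / k) = k log² k / (k - 1)`.
-/

open Real Set Filter Topology

lemma sum_mul_sum_sub_self {ι R : Type*} [Fintype ι] [LinearOrder ι] [CommRing R] (x : ι → R) :
    ∑ i, x i * (∑ j, x j - x i) =
      2 * ∑ p ∈ Finset.univ.filter (fun p : ι × ι => p.1 < p.2), x p.1 * x p.2 := by
  have hsplit : ∀ i, x i * (∑ j, x j - x i) =
      ∑ j, ((if i < j then x i * x j else 0) + if j < i then x j * x i else 0) := by
    intro i
    have hterm : ∀ j, ((if i < j then x i * x j else 0) + if j < i then x j * x i else 0) =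
        x i * x j - if i = j then x i * x j else 0 := by
      intro j
      rcases lt_trichotomy i j with h | rfl | h
      · simp [h, h.ne, h.not_gt]
      · simp
      · simp [h, h.ne', h.not_gt, mul_comm]
    simp only [hterm, Finset.sum_sub_distrib, Finset.sum_ite_eq, Finset.mem_univ, if_true,
      Finset.mul_sum, mul_sub]
  rw [Finset.sum_filter, Fintype.sum_prod_type]
  simp only [hsplit, Finset.sum_add_distrib]
  rw [Finset.sum_comm (f := fun i j => if j < i then x j * x i else 0)]
  ring

lemma ConcaveOn.mul_apply_inv_le {D : Set ℝ} {f : ℝ → ℝ} (hf : ConcaveOn ℝ D f) (h0 : 0 ∈ D)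
    (hf0 : 0 ≤ f 0) {a b : ℝ} (ha : 0 < a) (hab : a ≤ b) (ha' : a⁻¹ ∈ D) :
    a * f a⁻¹ ≤ b * f b⁻¹ := by
  have hb : 0 < b := ha.trans_le hab
  have hcomb := hf.2 ha' h0 (div_nonneg ha.le hb.le) (sub_nonneg.2 ((div_le_one hb).2 hab))
    (add_sub_cancel _ _)
  have hpt : (a / b) • a⁻¹ + (1 - a / b) • (0 : ℝ) = b⁻¹ := by
    simp only [smul_eq_mul, mul_zero, add_zero]
    field_simp
  rw [hpt, smul_eq_mul, smul_eq_mul] at hcomb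
  have := mul_le_mul_of_nonneg_left hcomb hb.le
  have hba : 0 ≤ (b - a) * f 0 := mul_nonneg (sub_nonneg.2 hab) hf0
  calc a * f a⁻¹ ≤ a * f a⁻¹ + (b - a) * f 0 := le_add_of_nonneg_right hba
    _ = b * (a / b * f a⁻¹ + (1 - a / b) * f 0) := by field_simp
    _ ≤ b * f b⁻¹ := this

lemma ConcaveOn.sum_le_mul_apply_inv {ι : Type*} {D : Set ℝ} {f : ℝ → ℝ}
    (hf : ConcaveOn ℝ D f) (h0 : 0 ∈ D) (hf0 : 0 ≤ f 0) {s : Finset ι} {p : ι → ℝ}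
    (hp : ∀ i ∈ s, p i ∈ D) (hsum : ∑ i ∈ s, p i = 1) {k : ℕ} (hk : s.card ≤ k) :
    ∑ i ∈ s, f (p i) ≤ k * f (k : ℝ)⁻¹ := by
  have hm : (0 : ℝ) < s.card := by
    have : s.Nonempty := Finset.nonempty_of_sum_ne_zero (by rw [hsum]; exact one_ne_zero)
    exact_mod_cast this.card_pos
  have hw : ∑ _i ∈ s, (s.card : ℝ)⁻¹ = 1 := by simp [hm.ne']
  have hmean : ∑ i ∈ s, (s.card : ℝ)⁻¹ • p i = (s.card : ℝ)⁻¹ := by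
    rw [← Finset.smul_sum, hsum, smul_eq_mul, mul_one]
  have hjensen := hf.le_map_sum (fun _ _ => inv_nonneg.2 hm.le) hw hp
  rw [hmean, ← Finset.smul_sum, smul_eq_mul, inv_mul_le_iff₀ hm] at hjensen
  have hmem : (s.card : ℝ)⁻¹ ∈ D := hmean ▸ hf.1.sum_mem (fun _ _ => inv_nonneg.2 hm.le) hw hp
  exact hjensen.trans (hf.mul_apply_inv_le h0 hf0 hm (by exact_mod_cast hk) hmem)

/-- The Cauchy–Schwarz weight `x (log s - log x)² / (s - x)` at `p = x / s`. It tends to `0` at both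
ends of `[0, 1]`, which are also its junk values there (`log 0 = 0`, `_ / 0 = 0`). -/
noncomputable def logSqWeight (p : ℝ) : ℝ := p * log p ^ 2 / (1 - p)

lemma logSqWeight_nonneg {p : ℝ} (hp : p ∈ Icc 0 1) : 0 ≤ logSqWeight p :=
  div_nonneg (mul_nonneg hp.1 (sq_nonneg _)) (sub_nonneg.2 hp.2)

lemma logSqWeight_inv (a : ℝ) : logSqWeight a⁻¹ = log a ^ 2 / (a - 1) := by
  rcases eq_or_ne a 0 with rfl | ha0
  · simp [logSqWeight]
  rcases eq_or_ne a 1 with rfl | ha1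
  · simp [logSqWeight]
  have : a - 1 ≠ 0 := sub_ne_zero.2 ha1
  rw [logSqWeight, log_inv]
  field_simp

lemma sq_mul_log_sub_log {x s : ℝ} (hx : 0 ≤ x) (hxs : x ≤ s) :
    (x * (log s - log x)) ^ 2 = x * (s - x) * logSqWeight (x / s) := by
  rcases hx.eq_or_lt with rfl | hx0
  · simp
  rcases hxs.eq_or_lt with rfl | hxs'
  · simp
  have hs0 : s ≠ 0 := (hx0.trans hxs').ne'
  have : s - x ≠ 0 := (sub_pos.2 hxs').ne'
  rw [logSqWeight, log_div hx0.ne' hs0]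
  field_simp
  ring

lemma hasDerivAt_logSqWeight {p : ℝ} (hp0 : p ≠ 0) (hp1 : p ≠ 1) :
    HasDerivAt logSqWeight ((log p ^ 2 + 2 * (1 - p) * log p) / (1 - p) ^ 2) p := by
  have h1p : 1 - p ≠ 0 := sub_ne_zero.2 (Ne.symm hp1)
  have hnum : HasDerivAt (fun q => q * log q ^ 2) (1 * log p ^ 2 + p * (2 * log p ^ 1 * p⁻¹)) p :=
    (hasDerivAt_id p).mul ((hasDerivAt_log hp0).pow 2)
  refine (hnum.div ((hasDerivAt_id p).const_sub 1) h1p).congr_deriv ?_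
  simp only [id]
  field_simp
  ring

lemma hasDerivAt_deriv_logSqWeight {p : ℝ} (hp0 : p ≠ 0) (hp1 : p ≠ 1) :
    HasDerivAt (fun q => (log q ^ 2 + 2 * (1 - q) * log q) / (1 - q) ^ 2)
      (2 * (log p + 1 - p) * (p * log p + 1 - p) / (p * (1 - p) ^ 3)) p := by
  have h1p : 1 - p ≠ 0 := sub_ne_zero.2 (Ne.symm hp1)
  have hlog := hasDerivAt_log hp0
  have hnum := (hlog.pow 2).add ((((hasDerivAt_id p).const_sub 1).const_mul 2).mul hlog)
  refine (hnum.div (((hasDerivAt_id p).const_sub 1).pow 2) (pow_ne_zero 2 h1p)).congr_deriv ?_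
  simp only [id, Pi.add_apply, Pi.mul_apply, Pi.pow_apply, Nat.cast_ofNat]
  field_simp
  ring

lemma logSqWeight_deriv2_nonpos {p : ℝ} (hp : p ∈ Ioo 0 1) :
    2 * (log p + 1 - p) * (p * log p + 1 - p) / (p * (1 - p) ^ 3) ≤ 0 := by
  obtain ⟨hp0, hp1⟩ := hp
  have hupper : log p + 1 - p ≤ 0 := by linarith [log_le_sub_one_of_pos hp0]
  have hlower : 0 ≤ p * log p + 1 - p := by
    have := log_le_sub_one_of_pos (inv_pos.2 hp0)
    rw [log_inv] at this
    have h := mul_le_mul_of_nonneg_left this hp0.le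
    rw [mul_sub, mul_inv_cancel₀ hp0.ne'] at h
    linarith
  apply div_nonpos_of_nonpos_of_nonneg
  · exact mul_nonpos_of_nonpos_of_nonneg (by linarith) hlower
  · have : 0 < 1 - p := by linarith
    positivity

lemma tendsto_logSqWeight_nhdsGT_zero : Tendsto logSqWeight (𝓝[>] 0) (𝓝 0) := by
  have hnum : Tendsto (fun p => p * log p ^ 2) (𝓝[>] 0) (𝓝 0) := by
    have := (tendsto_log_mul_rpow_nhdsGT_zero one_half_pos).pow 2
    rw [zero_pow two_ne_zero] at this
    refine this.congr' (eventually_mem_nhdsWithin.mono fun p (hp : 0 < p) => ?_)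
    rw [mul_pow, ← sqrt_eq_rpow, sq_sqrt hp.le, mul_comm]
  have hden : Tendsto (fun p : ℝ => 1 - p) (𝓝[>] 0) (𝓝 1) := by
    simpa using ((continuous_sub_left 1).tendsto (0 : ℝ)).mono_left nhdsWithin_le_nhds
  have := hnum.div hden one_ne_zero
  rw [div_one] at this
  exact this

lemma continuousAt_logSqWeight_one : ContinuousAt logSqWeight 1 := by
  rw [← continuousWithinAt_compl_self, ContinuousWithinAt]
  have hslope : Tendsto (slope log 1) (𝓝[≠] 1) (𝓝 1) := by
    simpa using (hasDerivAt_log one_ne_zero).tendsto_slope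
  have hlog : Tendsto (fun p => p * log p) (𝓝[≠] 1) (𝓝 0) := by
    simpa using (continuous_mul_log.tendsto 1).mono_left nhdsWithin_le_nhds
  -- away from `1`, `logSqWeight p = -(p log p) * slope log 1 p`
  have := (hlog.mul hslope).neg
  simp only [zero_mul, neg_zero] at this
  refine (this.congr' (eventually_mem_nhdsWithin.mono fun p (hp : p ≠ 1) => ?_)).trans ?_
  · have : p - 1 ≠ 0 := sub_ne_zero.2 hp
    rw [slope_def_field, logSqWeight, log_one]
    field_simp
    ring
  · simp [logSqWeight]

lemma continuousOn_logSqWeight : ContinuousOn logSqWeight (Icc 0 1) := by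
  intro p hp
  rcases eq_or_ne p 0 with rfl | hp0
  · rw [← continuousWithinAt_sdiff_self]
    have : ContinuousWithinAt logSqWeight (Ioi 0) 0 := by
      simpa [ContinuousWithinAt, logSqWeight] using tendsto_logSqWeight_nhdsGT_zero
    exact this.mono fun q hq => lt_of_le_of_ne hq.1.1 (Ne.symm hq.2)
  rcases eq_or_ne p 1 with rfl | hp1
  · exact continuousAt_logSqWeight_one.continuousWithinAt
  · exact (hasDerivAt_logSqWeight hp0 hp1).continuousAt.continuousWithinAt

lemma concaveOn_logSqWeight : ConcaveOn ℝ (Icc 0 1) logSqWeight := by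
  refine concaveOn_of_hasDerivWithinAt2_nonpos
    (f' := fun q => (log q ^ 2 + 2 * (1 - q) * log q) / (1 - q) ^ 2)
    (f'' := fun q => 2 * (log q + 1 - q) * (q * log q + 1 - q) / (q * (1 - q) ^ 3))
    (convex_Icc 0 1) continuousOn_logSqWeight (fun p hp => ?_) (fun p hp => ?_) (fun p hp => ?_)
  all_goals rw [interior_Icc] at hp
  · exact (hasDerivAt_logSqWeight hp.1.ne' hp.2.ne).hasDerivWithinAt
  · exact (hasDerivAt_deriv_logSqWeight hp.1.ne' hp.2.ne).hasDerivWithinAt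
  · exact logSqWeight_deriv2_nonpos hp

lemma sq_sum_mul_log_sub_log_le {ι : Type*} (s : Finset ι) {x : ι → ℝ}
    (hx : ∀ i ∈ s, 0 ≤ x i) :
    (∑ i ∈ s, x i * (log (∑ j ∈ s, x j) - log (x i))) ^ 2 ≤
      (∑ i ∈ s, x i * (∑ j ∈ s, x j - x i)) * ∑ i ∈ s, logSqWeight (x i / ∑ j ∈ s, x j) := by
  have hle : ∀ i ∈ s, x i ≤ ∑ j ∈ s, x j := fun i hi => Finset.single_le_sum hx hi
  refine Finset.sum_sq_le_sum_mul_sum_of_sq_le_mul s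
    (fun i hi => mul_nonneg (hx i hi) (sub_nonneg.2 (hle i hi)))
    (fun i hi => logSqWeight_nonneg ⟨?_, ?_⟩)
    (fun i hi => (sq_mul_log_sub_log (hx i hi) (hle i hi)).le)
  · exact div_nonneg (hx i hi) ((hx i hi).trans (hle i hi))
  · exact div_le_one_of_le₀ (hle i hi) ((hx i hi).trans (hle i hi))

lemma sum_logSqWeight_div_sum_le {ι : Type*} [Fintype ι] {x : ι → ℝ} (hx : ∀ i, 0 ≤ x i)
    (hs : ∑ i, x i ≠ 0) {k : ℕ} (hk : (Finset.univ.filter (fun i => x i ≠ 0)).card ≤ k) :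
    ∑ i, logSqWeight (x i / ∑ j, x j) ≤ k * (log k ^ 2 / (k - 1)) := by
  have hle : ∀ i, x i ≤ ∑ j, x j := fun i =>
    Finset.single_le_sum (fun j _ => hx j) (Finset.mem_univ i)
  rw [← logSqWeight_inv, ← Finset.sum_filter_of_ne (p := fun i => x i ≠ 0)
    (fun i _ h hxi => h (by simp [hxi, logSqWeight]))]
  refine concaveOn_logSqWeight.sum_le_mul_apply_inv ⟨le_rfl, zero_le_one⟩
    (by simp [logSqWeight]) (fun i _ => ⟨?_, ?_⟩) ?_ hk
  · exact div_nonneg (hx i) ((hx i).trans (hle i))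
  · exact div_le_one_of_le₀ (hle i) ((hx i).trans (hle i))
  · rw [← Finset.sum_div, Finset.sum_filter_ne_zero, div_self hs]

theorem entropy_le_ck_sqrt_e2_rank_general (N k : ℕ) (x : Fin N → ℝ)
    (hx : ∀ i, 0 ≤ x i) (hne : ∃ i, x i ≠ 0)
    (hrank : (Finset.univ.filter (fun i => x i ≠ 0)).card ≤ k) :
    (∑ i, (-x i * Real.log (x i))) - (-(∑ i, x i) * Real.log (∑ i, x i)) ≤
      Real.log k * Real.sqrt (2 * k / (k - 1)) *
        Real.sqrt (∑ p ∈ Finset.univ.filter (fun p : Fin N × Fin N => p.1 < p.2),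
          x p.1 * x p.2) := by
  set e₂ := ∑ p ∈ Finset.univ.filter (fun p : Fin N × Fin N => p.1 < p.2), x p.1 * x p.2
  have he₂ : 0 ≤ e₂ := Finset.sum_nonneg fun p _ => mul_nonneg (hx p.1) (hx p.2)
  have hs : ∑ i, x i ≠ 0 := by
    obtain ⟨j, hj⟩ := hne
    exact (Finset.sum_pos' (fun i _ => hx i) ⟨j, Finset.mem_univ j, (hx j).lt_of_ne' hj⟩).ne'
  have hentropy : (∑ i, (-x i * log (x i))) - (-(∑ i, x i) * log (∑ i, x i)) =
      ∑ i, x i * (log (∑ j, x j) - log (x i)) := by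
    simp only [mul_sub, Finset.sum_sub_distrib, ← Finset.sum_mul, neg_mul, Finset.sum_neg_distrib]
    ring
  have hcs := sq_sum_mul_log_sub_log_le Finset.univ (fun i _ => hx i)
  rw [sum_mul_sum_sub_self] at hcs
  have hweight := sum_logSqWeight_div_sum_le hx hs hrank
  have hsq := hcs.trans (mul_le_mul_of_nonneg_left hweight (by linarith))
  rw [hentropy]
  calc _ ≤ √(2 * e₂ * (k * (log k ^ 2 / (k - 1)))) := (le_abs_self _).trans (abs_le_sqrt hsq)
    _ = log k * √(2 * k / (k - 1)) * √e₂ := by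
        rw [show 2 * e₂ * (k * (log k ^ 2 / (k - 1))) = log k ^ 2 * (2 * k / (k - 1)) * e₂ by ring,
          sqrt_mul' _ he₂, sqrt_mul (sq_nonneg _), sqrt_sq (log_natCast_nonneg k)]

theorem entropy_le_ck_sqrt_e2_rank (N k : ℕ) (hk : 2 ≤ k) (x : Fin N → ℝ)
    (hx : ∀ i, 0 ≤ x i) (hne : ∃ i, x i ≠ 0)
    (hrank : (Finset.univ.filter (fun i => x i ≠ 0)).card ≤ k) :
    (∑ i, (-x i * Real.log (x i))) - (-(∑ i, x i) * Real.log (∑ i, x i)) ≤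
      Real.log k * Real.sqrt (2 * k / (k - 1)) *
        Real.sqrt (∑ p ∈ Finset.univ.filter (fun p : Fin N × Fin N => p.1 < p.2),
          x p.1 * x p.2) :=
  entropy_le_ck_sqrt_e2_rank_general N k x hx hne hrank
end

section
/- For nonnegative reals x₁,…,x_N with ∑ xᵢ = 1, define f = (∑ᵢ η(xᵢ))/√(∑_{i<j} xᵢxⱼ) on the set where not all mass is on a single coordinate. Then f attains its maximum value √(2N/(N-1))·log N exactly at the uniform distribution xᵢ = 1/N. -/
/-!
Write `H = ∑ η(xᵢ)` and `2 e₂ = ∑ xᵢ (1 - xᵢ)`. Cauchy–Schwarz applied to the splitting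
`xᵢ |log xᵢ| = √(xᵢ (1 - xᵢ)) · √(g xᵢ)` with `g x = x log² x / (1 - x)` gives
`H² ≤ 2 e₂ ∑ g(xᵢ)`. The function `g` is strictly concave on `[0, 1)`, so by Jensen
`∑ g(xᵢ) ≤ N g(1/N) = N log² N / (N - 1)`, strictly unless `x` is uniform.
-/

open Real Finset

theorem neg_of_hasDerivAt_of_neg_of_eq_zero {f f' : ℝ → ℝ} (hf : ∀ t, HasDerivAt f (f' t) t)
    (hf' : ∀ t, 0 < t → f' t < 0) (h0 : f 0 = 0) {t : ℝ} (ht : 0 < t) : f t < 0 := by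
  have hanti : StrictAntiOn f (Set.Ici 0) :=
    strictAntiOn_of_hasDerivWithinAt_neg (convex_Ici 0)
      (fun s _ => (hf s).continuousAt.continuousWithinAt)
      (fun s _ => (hf s).hasDerivWithinAt)
      (fun s hs => hf' s (by simpa using hs))
  simpa [h0] using hanti Set.self_mem_Ici ht.le ht

theorem strictConcaveOn_of_hasDerivAt2_neg {D : Set ℝ} (hD : Convex ℝ D) {f f' f'' : ℝ → ℝ}
    (hf : ContinuousOn f D) (hf' : ∀ x ∈ interior D, HasDerivAt f (f' x) x)
    (hf'' : ∀ x ∈ interior D, HasDerivAt f' (f'' x) x)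
    (hf''₀ : ∀ x ∈ interior D, f'' x < 0) : StrictConcaveOn ℝ D f := by
  have hanti : StrictAntiOn f' (interior D) :=
    strictAntiOn_of_hasDerivWithinAt_neg hD.interior
      (fun x hx => (hf'' x hx).continuousAt.continuousWithinAt)
      (fun x hx => (hf'' x (interior_subset hx)).hasDerivWithinAt)
      (fun x hx => hf''₀ x (interior_subset hx))
  exact (hanti.congr fun x hx => (hf' x hx).deriv.symm).strictConcaveOn_of_deriv hD hf

theorem div_sqrt_lt_of_sq_lt_sq_mul {a b c : ℝ} (hb : 0 ≤ b) (hc : 0 < c) (h : a ^ 2 < b ^ 2 * c) :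
    a / √c < b := by
  rw [div_lt_iff₀ (sqrt_pos.2 hc)]
  refine (le_abs_self a).trans_lt (abs_lt_of_sq_lt_sq ?_ (by positivity))
  rwa [mul_pow, sq_sqrt hc.le]

/-- The numerator of the second derivative of `logSqRatio` at `x` is `x ^ 2 * psi (-log x)`. -/
noncomputable def psi (t : ℝ) : ℝ := (exp t - 1) ^ 2 - t * (exp t ^ 2 - 1) + t ^ 2 * exp t

noncomputable def psiDeriv (t : ℝ) : ℝ := (1 - 2 * t) * exp t ^ 2 + (t ^ 2 + 2 * t - 2) * exp t + 1

theorem hasDerivAt_psi (t : ℝ) : HasDerivAt psi (psiDeriv t) t := by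
  have he := hasDerivAt_exp t
  have hid := hasDerivAt_id t
  refine ((((he.sub_const 1).pow 2).sub (hid.mul ((he.pow 2).sub_const 1))).add
    ((hid.pow 2).mul he)).congr_deriv ?_
  simp only [psiDeriv, id_eq, Pi.pow_apply]
  ring

theorem hasDerivAt_psiDeriv (t : ℝ) :
    HasDerivAt psiDeriv (t * exp t * (t + 4 - 4 * exp t)) t := by
  have he := hasDerivAt_exp t
  have hid := hasDerivAt_id t
  refine (((((hid.const_mul 2).const_sub 1).mul (he.pow 2)).add
    ((((hid.pow 2).add (hid.const_mul 2)).sub_const 2).mul he)).add_const 1).congr_deriv ?_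
  simp only [id_eq, Pi.pow_apply, Pi.add_apply]
  ring

theorem psiDeriv_neg {t : ℝ} (ht : 0 < t) : psiDeriv t < 0 := by
  refine neg_of_hasDerivAt_of_neg_of_eq_zero hasDerivAt_psiDeriv (fun s hs => ?_)
    (by norm_num [psiDeriv]) ht
  have : s + 1 < exp s := add_one_lt_exp hs.ne'
  have : 0 < s * exp s := by positivity
  nlinarith

theorem psi_neg {t : ℝ} (ht : 0 < t) : psi t < 0 :=
  neg_of_hasDerivAt_of_neg_of_eq_zero hasDerivAt_psi (fun _ => psiDeriv_neg) (by simp [psi]) ht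

noncomputable def logSqRatio (x : ℝ) : ℝ := x * log x ^ 2 / (1 - x)

noncomputable def logSqRatioDeriv (x : ℝ) : ℝ := (log x ^ 2 + 2 * (1 - x) * log x) / (1 - x) ^ 2

theorem hasDerivAt_logSqRatio {x : ℝ} (hx₀ : 0 < x) (hx₁ : x ≠ 1) :
    HasDerivAt logSqRatio (logSqRatioDeriv x) x := by
  have hlog := hasDerivAt_log hx₀.ne'
  refine (((hasDerivAt_id x).mul (hlog.pow 2)).div ((hasDerivAt_id x).const_sub 1)
    (sub_ne_zero.2 hx₁.symm)).congr_deriv ?_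
  simp only [logSqRatioDeriv, id_eq, Pi.mul_apply, Pi.pow_apply]
  field_simp
  ring

theorem hasDerivAt_logSqRatioDeriv {x : ℝ} (hx₀ : 0 < x) (hx₁ : x ≠ 1) :
    HasDerivAt logSqRatioDeriv
      (2 * ((1 - x) ^ 2 + (1 - x ^ 2) * log x + x * log x ^ 2) / (x * (1 - x) ^ 3)) x := by
  have hlog := hasDerivAt_log hx₀.ne'
  have hsub := (hasDerivAt_id x).const_sub 1
  refine (((hlog.pow 2).add ((hsub.const_mul 2).mul hlog)).div (hsub.pow 2)
    (pow_ne_zero 2 (sub_ne_zero.2 hx₁.symm))).congr_deriv ?_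
  have : 1 - x ≠ 0 := sub_ne_zero.2 hx₁.symm
  simp only [id_eq, Pi.add_apply, Pi.mul_apply, Pi.pow_apply]
  field_simp
  ring

theorem logSqRatio_deriv2_numerator_neg {x : ℝ} (hx₀ : 0 < x) (hx₁ : x < 1) :
    (1 - x) ^ 2 + (1 - x ^ 2) * log x + x * log x ^ 2 < 0 := by
  have hpsi : (1 - x) ^ 2 + (1 - x ^ 2) * log x + x * log x ^ 2 = x ^ 2 * psi (-log x) := by
    rw [psi, exp_neg, exp_log hx₀]
    field_simp
    ring
  rw [hpsi]
  exact mul_neg_of_pos_of_neg (by positivity) (psi_neg (neg_pos.2 (log_neg hx₀ hx₁)))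

theorem continuousOn_mul_log_sq : ContinuousOn (fun x => x * log x ^ 2) (Set.Ici 0) := by
  -- `x log² x = 4 (√x log √x)²` reduces continuity at `0` to that of `x log x`
  have hcont : Continuous fun x => 4 * (√x * log √x) ^ 2 :=
    continuous_const.mul ((continuous_mul_log.comp continuous_sqrt).pow 2)
  refine hcont.continuousOn.congr fun x (hx : 0 ≤ x) => ?_
  dsimp only
  rw [log_sqrt hx, mul_pow, sq_sqrt hx]
  ring

theorem strictConcaveOn_logSqRatio : StrictConcaveOn ℝ (Set.Ico 0 1) logSqRatio := by
  have hcont : ContinuousOn logSqRatio (Set.Ico 0 1) :=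
    (continuousOn_mul_log_sq.mono Set.Ico_subset_Ici_self).div
      (continuousOn_const.sub continuousOn_id) fun x hx => (sub_pos.2 hx.2).ne'
  refine strictConcaveOn_of_hasDerivAt2_neg (f' := logSqRatioDeriv)
    (f'' := fun x => 2 * ((1 - x) ^ 2 + (1 - x ^ 2) * log x + x * log x ^ 2) / (x * (1 - x) ^ 3))
    (convex_Ico 0 1) hcont ?_ ?_ ?_ <;>
    rw [interior_Ico] <;> intro x ⟨hx₀, hx₁⟩
  · exact hasDerivAt_logSqRatio hx₀ hx₁.ne
  · exact hasDerivAt_logSqRatioDeriv hx₀ hx₁.ne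
  · have := logSqRatio_deriv2_numerator_neg hx₀ hx₁
    have : 0 < 1 - x := sub_pos.2 hx₁
    exact div_neg_of_neg_of_pos (by linarith) (by positivity)

section Distribution

variable {ι : Type*} [Fintype ι]

theorem StrictConcaveOn.sum_lt_card_mul_map_mean {s : Set ℝ} {f : ℝ → ℝ}
    (hf : StrictConcaveOn ℝ s f) {p : ι → ℝ} (hp : ∀ i, p i ∈ s) (hne : ∃ j k, p j ≠ p k) :
    ∑ i, f (p i) < Fintype.card ι * f ((∑ i, p i) / Fintype.card ι) := by
  obtain ⟨j, k, hjk⟩ := hne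
  have hcard : (0 : ℝ) < Fintype.card ι := by
    exact_mod_cast Fintype.card_pos_iff.2 ⟨j⟩
  have hjensen := hf.lt_map_sum (t := univ) (w := fun _ => (Fintype.card ι : ℝ)⁻¹)
    (fun _ _ => inv_pos.2 hcard) (by simp [hcard.ne']) (fun i _ => hp i)
    ⟨j, mem_univ j, k, mem_univ k, hjk⟩
  simp only [smul_eq_mul, ← mul_sum] at hjensen
  rw [div_eq_inv_mul]
  calc ∑ i, f (p i) = Fintype.card ι * ((Fintype.card ι : ℝ)⁻¹ * ∑ i, f (p i)) := by
        field_simp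
    _ < _ := by gcongr

theorem lt_one_of_sum_eq_one {x : ι → ℝ} (hx : ∀ i, 0 ≤ x i) (hsum : ∑ i, x i = 1) {i : ι}
    (hi : x i ≠ 1) : x i < 1 :=
  lt_of_le_of_ne (hsum ▸ single_le_sum (fun j _ => hx j) (mem_univ i)) hi

theorem eq_one_div_card_of_forall_eq {x : ι → ℝ} (hconst : ∀ j k, x j = x k)
    (hsum : ∑ i, x i = 1) (i : ι) : x i = 1 / Fintype.card ι := by
  have hsum' : Fintype.card ι * x i = 1 := by
    rw [← hsum, sum_congr rfl fun j _ => hconst j i, sum_const, card_univ, nsmul_eq_mul]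
  rw [eq_div_iff (left_ne_zero_of_mul_eq_one hsum'), mul_comm, hsum']

theorem sq_sum_negMulLog_le {x : ι → ℝ} (hx : ∀ i, x i ∈ Set.Ico 0 1) :
    (∑ i, negMulLog (x i)) ^ 2 ≤ (∑ i, x i * (1 - x i)) * ∑ i, logSqRatio (x i) := by
  refine sum_sq_le_sum_mul_sum_of_sq_le_mul _ (fun i _ => ?_) (fun i _ => ?_)
    (fun i _ => le_of_eq ?_) <;> obtain ⟨hx₀, hx₁⟩ := hx i <;> have : 0 < 1 - x i := sub_pos.2 hx₁
  · positivity
  · exact div_nonneg (by positivity) this.le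
  · rw [negMulLog, logSqRatio]
    field_simp

theorem one_lt_card_of_exists_ne {α : Type*} {p : ι → α} (hne : ∃ j k, p j ≠ p k) :
    (1 : ℝ) < Fintype.card ι := by
  obtain ⟨j, k, hjk⟩ := hne
  exact_mod_cast Fintype.one_lt_card_iff.2 ⟨j, k, fun h => hjk (congrArg p h)⟩

theorem sum_logSqRatio_lt {x : ι → ℝ} (hx : ∀ i, x i ∈ Set.Ico 0 1) (hsum : ∑ i, x i = 1)
    (hne : ∃ j k, x j ≠ x k) :
    ∑ i, logSqRatio (x i) < Fintype.card ι * log (Fintype.card ι) ^ 2 / (Fintype.card ι - 1) := by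
  have hlt := strictConcaveOn_logSqRatio.sum_lt_card_mul_map_mean hx hne
  have hcard := one_lt_card_of_exists_ne hne
  have hcard₁ : (Fintype.card ι : ℝ) - 1 ≠ 0 := (sub_pos.2 hcard).ne'
  rw [hsum, logSqRatio, one_div, log_inv] at hlt
  convert hlt using 1
  field_simp

variable [LinearOrder ι]

theorem two_mul_sum_lt_add_sum_sq (x : ι → ℝ) :
    2 * ∑ p ∈ univ.filter (fun p : ι × ι => p.1 < p.2), x p.1 * x p.2 + ∑ i, x i ^ 2 =
      (∑ i, x i) ^ 2 := by
  have hsplit : ∀ i j, x i * x j = (if i < j then x i * x j else 0) +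
      (if j < i then x j * x i else 0) + if i = j then x i ^ 2 else 0 := by
    intro i j
    rcases lt_trichotomy i j with h | rfl | h
    · simp [h, h.ne, h.not_gt]
    · simp [sq]
    · simp [h, h.ne', h.not_gt, mul_comm]
  calc _ = ∑ i, ∑ j, ((if i < j then x i * x j else 0) +
        (if j < i then x j * x i else 0) + if i = j then x i ^ 2 else 0) := by
        rw [sum_filter, Fintype.sum_prod_type]
        simp only [sum_add_distrib]
        rw [sum_comm (f := fun i j => if j < i then x j * x i else 0)]
        simp [two_mul]
    _ = (∑ i, x i) ^ 2 := by
        rw [sq, sum_mul_sum]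
        exact sum_congr rfl fun i _ => sum_congr rfl fun j _ => (hsplit i j).symm

theorem sum_negMulLog_div_sqrt_lt {x : ι → ℝ} (hx : ∀ i, x i ∈ Set.Ico 0 1) (hsum : ∑ i, x i = 1)
    (hne : ∃ j k, x j ≠ x k) :
    (∑ i, negMulLog (x i)) /
        √(∑ p ∈ univ.filter (fun p : ι × ι => p.1 < p.2), x p.1 * x p.2) <
      √(2 * Fintype.card ι / (Fintype.card ι - 1)) * log (Fintype.card ι) := by
  have hcard := one_lt_card_of_exists_ne hne
  set n : ℝ := (Fintype.card ι : ℝ)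
  set P := ∑ p ∈ univ.filter (fun p : ι × ι => p.1 < p.2), x p.1 * x p.2
  have hP : 2 * P = ∑ i, x i * (1 - x i) := by
    have := two_mul_sum_lt_add_sum_sq x
    simp only [mul_sub, mul_one, sum_sub_distrib, hsum, ← sq] at this ⊢
    linarith
  have hPpos : 0 < ∑ i, x i * (1 - x i) := by
    obtain ⟨i, hi⟩ : ∃ i, 0 < x i := by
      by_contra! h
      linarith [sum_nonpos fun i (_ : i ∈ univ) => h i]
    exact sum_pos' (fun j _ => mul_nonneg (hx j).1 (sub_pos.2 (hx j).2).le)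
      ⟨i, mem_univ i, mul_pos hi (sub_pos.2 (hx i).2)⟩
  have hn₁ : 0 < n - 1 := sub_pos.2 hcard
  refine div_sqrt_lt_of_sq_lt_sq_mul (mul_nonneg (sqrt_nonneg _) (log_nonneg hcard.le))
    (by linarith) ?_
  calc (∑ i, negMulLog (x i)) ^ 2 ≤ (∑ i, x i * (1 - x i)) * ∑ i, logSqRatio (x i) :=
        sq_sum_negMulLog_le hx
    _ < (∑ i, x i * (1 - x i)) * (n * log n ^ 2 / (n - 1)) := by
        gcongr
        exact sum_logSqRatio_lt hx hsum hne
    _ = (√(2 * n / (n - 1)) * log n) ^ 2 * P := by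
        rw [← hP, mul_pow, sq_sqrt (by positivity)]
        field_simp

theorem sum_negMulLog_div_sqrt_of_uniform {x : ι → ℝ} (hx : ∀ i, x i = 1 / Fintype.card ι) :
    (∑ i, negMulLog (x i)) /
        √(∑ p ∈ univ.filter (fun p : ι × ι => p.1 < p.2), x p.1 * x p.2) =
      √(2 * Fintype.card ι / (Fintype.card ι - 1)) * log (Fintype.card ι) := by
  have hpairs := two_mul_sum_lt_add_sum_sq x
  have hH : ∑ i, negMulLog (x i) = Fintype.card ι * negMulLog (1 / Fintype.card ι) := by
    simp [hx]
  have hsum : ∑ i, x i = Fintype.card ι * (1 / Fintype.card ι) := by simp [hx]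
  have hsq : ∑ i, x i ^ 2 = Fintype.card ι * (1 / Fintype.card ι) ^ 2 := by simp [hx]
  rw [hsum, hsq] at hpairs
  rw [hH]
  generalize (Fintype.card ι : ℝ) = n at hpairs ⊢
  set P := ∑ p ∈ univ.filter (fun p : ι × ι => p.1 < p.2), x p.1 * x p.2
  rcases eq_or_ne n 0 with rfl | hn
  · simp
  · have hP : P = (2 * n / (n - 1))⁻¹ := by
      rw [inv_div]
      field_simp at hpairs ⊢
      linarith
    rw [hP, sqrt_inv, div_inv_eq_mul, negMulLog, one_div, log_inv]
    field_simp

end Distribution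

theorem f_max_at_uniform_general (N : ℕ) (x : Fin N → ℝ)
    (hx : ∀ i, 0 ≤ x i) (hsum : ∑ i, x i = 1)
    (hnotpure : ¬ ∃ i, x i = 1) :
    (∑ i, (-x i * Real.log (x i))) /
        Real.sqrt (∑ p ∈ Finset.univ.filter (fun p : Fin N × Fin N => p.1 < p.2),
          x p.1 * x p.2) ≤ Real.sqrt (2 * N / (N - 1)) * Real.log N ∧
    ((∑ i, (-x i * Real.log (x i))) /
        Real.sqrt (∑ p ∈ Finset.univ.filter (fun p : Fin N × Fin N => p.1 < p.2),
          x p.1 * x p.2) = Real.sqrt (2 * N / (N - 1)) * Real.log N ↔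
      ∀ i, x i = 1 / N) := by
  by_cases hu : ∀ i, x i = 1 / N
  · have h := sum_negMulLog_div_sqrt_of_uniform (x := x) (by simpa using hu)
    simp only [Fintype.card_fin] at h
    exact ⟨h.le, iff_of_true h hu⟩
  · have hne : ∃ j k, x j ≠ x k := by
      by_contra! hconst
      exact hu (by simpa using eq_one_div_card_of_forall_eq hconst hsum)
    have hIco : ∀ i, x i ∈ Set.Ico 0 1 :=
      fun i => ⟨hx i, lt_one_of_sum_eq_one hx hsum fun h => hnotpure ⟨i, h⟩⟩
    have h := sum_negMulLog_div_sqrt_lt hIco hsum hne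
    simp only [Fintype.card_fin] at h
    exact ⟨h.le, iff_of_false h.ne hu⟩

theorem f_max_at_uniform (N : ℕ) (hN : 2 ≤ N) (x : Fin N → ℝ)
    (hx : ∀ i, 0 ≤ x i) (hsum : ∑ i, x i = 1)
    (hnotpure : ¬ ∃ i, x i = 1) :
    (∑ i, (-x i * Real.log (x i))) /
        Real.sqrt (∑ p ∈ Finset.univ.filter (fun p : Fin N × Fin N => p.1 < p.2),
          x p.1 * x p.2) ≤ Real.sqrt (2 * N / (N - 1)) * Real.log N ∧
    ((∑ i, (-x i * Real.log (x i))) /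
        Real.sqrt (∑ p ∈ Finset.univ.filter (fun p : Fin N × Fin N => p.1 < p.2),
          x p.1 * x p.2) = Real.sqrt (2 * N / (N - 1)) * Real.log N ↔
      ∀ i, x i = 1 / N) :=
  f_max_at_uniform_general N x hx hsum hnotpure
end

section
/- Let Φ be a trace-preserving positive linear map on density matrices whose outputs on pure states have rank at most n. Then the minimum output entropy satisfies S_min(Φ) ≤ log(n)·√(n/(n-1))·min over unit vectors ψ of √(1 - Tr(Φ(|ψ⟩⟨ψ|)²)). -/
/-!
Let `λ` be the spectrum of the output `Φ(|ψ⟩⟨ψ|)`. Since `(-p log p)² = p (1 - p) g(p)` with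
`g(p) = p log² p / (1 - p)`, Cauchy–Schwarz gives `S² ≤ (1 - ∑ λᵢ²) ∑ g(λᵢ)`. The function `g` is
concave on `(0, 1)` and its tangent at `1/n` is nonnegative at `0`, so summing the tangent-line
bound over the at most `n` nonzero eigenvalues yields `∑ g(λᵢ) ≤ n g(1/n) = log² n · n/(n - 1)`.
The minimum output entropy is at most the entropy of this particular output.
-/

open ComplexOrder

/-- Von Neumann entropy of a matrix (via eigenvalues when hermitian). -/
noncomputable def vnEntropy {M : ℕ} (σ : Matrix (Fin M) (Fin M) ℂ) : ℝ :=
  if h : σ.IsHermitian then ∑ i, (-(h.eigenvalues i) * Real.log (h.eigenvalues i))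
  else 0

open Real Set

theorem ConcaveOn.le_add_mul_sub_of_hasDerivAt {S : Set ℝ} {f : ℝ → ℝ} {f' x y : ℝ}
    (hf : ConcaveOn ℝ S f) (hx : x ∈ S) (hy : y ∈ S) (hf' : HasDerivAt f f' x) :
    f y ≤ f x + f' * (y - x) := by
  rcases lt_trichotomy y x with hyx | rfl | hxy
  · have := hf.le_slope_of_hasDerivAt hy hx hyx hf'
    rw [slope_def_field, le_div_iff₀ (sub_pos.2 hyx)] at this
    linarith
  · simp
  · have := hf.slope_le_of_hasDerivAt hx hy hxy hf'
    rw [slope_def_field, div_le_iff₀ (sub_pos.2 hxy)] at this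
    linarith

noncomputable def entropyWeight (p : ℝ) : ℝ := p * log p ^ 2 / (1 - p)

noncomputable def entropyWeightDeriv (p : ℝ) : ℝ :=
  (log p ^ 2 + 2 * log p * (1 - p)) / (1 - p) ^ 2

theorem negMulLog_sq_eq_mul_entropyWeight (p : ℝ) :
    negMulLog p ^ 2 = p * (1 - p) * entropyWeight p := by
  rcases eq_or_ne p 1 with rfl | hp
  · simp
  · have : 1 - p ≠ 0 := sub_ne_zero.2 hp.symm
    rw [negMulLog, entropyWeight]
    field_simp

theorem entropyWeight_nonneg {p : ℝ} (h0 : 0 ≤ p) (h1 : p ≤ 1) : 0 ≤ entropyWeight p :=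
  div_nonneg (by positivity) (sub_nonneg.2 h1)

theorem hasDerivAt_entropyWeight {p : ℝ} (h0 : p ≠ 0) (h1 : p ≠ 1) :
    HasDerivAt entropyWeight (entropyWeightDeriv p) p := by
  have h1' : 1 - p ≠ 0 := sub_ne_zero.2 h1.symm
  refine (((hasDerivAt_id' p).mul ((hasDerivAt_log h0).pow 2)).div
    ((hasDerivAt_id' p).const_sub 1) h1').congr_deriv ?_
  simp only [entropyWeightDeriv, Pi.mul_apply, Pi.pow_apply]
  field_simp
  ring

theorem hasDerivAt_entropyWeightDeriv {p : ℝ} (h0 : p ≠ 0) (h1 : p ≠ 1) :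
    HasDerivAt entropyWeightDeriv
      (2 * (log p + 1 - p) * (log p + (1 - p) / p) / (1 - p) ^ 3) p := by
  have h1' : 1 - p ≠ 0 := sub_ne_zero.2 h1.symm
  have hlog := hasDerivAt_log h0
  have hsub := (hasDerivAt_id' p).const_sub 1
  refine (((hlog.pow 2).add ((hlog.const_mul 2).mul hsub)).div (hsub.pow 2)
    (pow_ne_zero 2 h1')).congr_deriv ?_
  simp only [Pi.mul_apply, Pi.pow_apply, Pi.add_apply]
  field_simp
  ring

theorem concaveOn_entropyWeight : ConcaveOn ℝ (Ioo 0 1) entropyWeight := by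
  refine concaveOn_of_hasDerivWithinAt2_nonpos (convex_Ioo 0 1)
    (fun p hp ↦ (hasDerivAt_entropyWeight hp.1.ne' hp.2.ne).continuousAt.continuousWithinAt)
    (fun p hp ↦ ?_) (fun p hp ↦ ?_) (fun p hp ↦ ?_)
    (f' := entropyWeightDeriv)
    (f'' := fun p ↦ 2 * (log p + 1 - p) * (log p + (1 - p) / p) / (1 - p) ^ 3)
  all_goals simp only [interior_Ioo] at hp ⊢
  all_goals obtain ⟨h0, h1⟩ := hp
  · exact (hasDerivAt_entropyWeight h0.ne' h1.ne).hasDerivWithinAt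
  · exact (hasDerivAt_entropyWeightDeriv h0.ne' h1.ne).hasDerivWithinAt
  · have hlog_le : log p + 1 - p ≤ 0 := by linarith [log_le_sub_one_of_pos h0]
    have hlog_ge : 0 ≤ log p + (1 - p) / p := by
      rw [sub_div, div_self h0.ne']
      linarith [one_sub_inv_le_log_of_pos h0, one_div p]
    exact div_nonpos_of_nonpos_of_nonneg
      (mul_nonpos_of_nonpos_of_nonneg (by linarith) hlog_ge) (by have := sub_pos.2 h1; positivity)

theorem mul_entropyWeightDeriv_le {q : ℝ} (h0 : 0 < q) (h1 : q < 1) :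
    q * entropyWeightDeriv q ≤ entropyWeight q := by
  have h1' : 0 < 1 - q := sub_pos.2 h1
  have hlog : 0 ≤ -log q := neg_nonneg.2 (log_nonpos h0.le h1.le)
  have hqlog : q * -log q ≤ 1 - q := by
    have := mul_le_mul_of_nonneg_left
      (show -log q ≤ q⁻¹ - 1 by linarith [one_sub_inv_le_log_of_pos h0]) h0.le
    rwa [mul_sub, mul_inv_cancel₀ h0.ne', mul_one] at this
  rw [entropyWeight, entropyWeightDeriv, mul_div_assoc', div_le_div_iff₀ (by positivity) h1']
  nlinarith [mul_nonneg (mul_nonneg h0.le hlog) h1'.le]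

theorem mul_entropyWeight_inv (x : ℝ) :
    x * entropyWeight x⁻¹ = log x ^ 2 * (x / (x - 1)) := by
  rcases eq_or_ne x 0 with rfl | h0
  · simp
  rcases eq_or_ne x 1 with rfl | h1
  · simp [entropyWeight]
  have : x - 1 ≠ 0 := sub_ne_zero.2 h1
  rw [entropyWeight, log_inv]
  field_simp

theorem sum_entropyWeight_le {ι : Type*} (s : Finset ι) (lam : ι → ℝ) {n : ℕ} (hn : 2 ≤ n)
    (hlam : ∀ i ∈ s, lam i ∈ Ioo 0 1) (hsum : ∑ i ∈ s, lam i = 1) (hcard : s.card ≤ n) :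
    ∑ i ∈ s, entropyWeight (lam i) ≤ n * entropyWeight (n : ℝ)⁻¹ := by
  set q : ℝ := (n : ℝ)⁻¹
  have hn' : (1 : ℝ) < n := by exact_mod_cast hn
  have hq : q ∈ Ioo 0 1 := ⟨by positivity, inv_lt_one_of_one_lt₀ hn'⟩
  have hnq : (n : ℝ) * q = 1 := mul_inv_cancel₀ (by positivity)
  have hcard' : (s.card : ℝ) ≤ n := by exact_mod_cast hcard
  have htangent := mul_entropyWeightDeriv_le hq.1 hq.2
  calc ∑ i ∈ s, entropyWeight (lam i)
      ≤ ∑ i ∈ s, (entropyWeight q + entropyWeightDeriv q * (lam i - q)) :=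
        Finset.sum_le_sum fun i hi ↦ concaveOn_entropyWeight.le_add_mul_sub_of_hasDerivAt hq
          (hlam i hi) (hasDerivAt_entropyWeight hq.1.ne' hq.2.ne)
    _ = s.card * (entropyWeight q - q * entropyWeightDeriv q) + entropyWeightDeriv q := by
        rw [Finset.sum_add_distrib, ← Finset.mul_sum, Finset.sum_sub_distrib, hsum]
        simp only [Finset.sum_const, nsmul_eq_mul]
        ring
    _ ≤ n * (entropyWeight q - q * entropyWeightDeriv q) + entropyWeightDeriv q := by
        gcongr
    _ = n * entropyWeight q := by linear_combination -entropyWeightDeriv q * hnq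

theorem sum_negMulLog_le_of_card_support_le {ι : Type*} [Fintype ι] (lam : ι → ℝ) {n : ℕ}
    (hn : 2 ≤ n) (h0 : ∀ i, 0 ≤ lam i) (hsum : ∑ i, lam i = 1)
    (hcard : Fintype.card {i // lam i ≠ 0} ≤ n) :
    ∑ i, negMulLog (lam i) ≤ log n * √(n / (n - 1)) * √(1 - ∑ i, lam i ^ 2) := by
  have h1 (i) : lam i ≤ 1 := hsum ▸ Finset.single_le_sum (fun j _ ↦ h0 j) (Finset.mem_univ i)
  have hvar : ∑ i, lam i * (1 - lam i) = 1 - ∑ i, lam i ^ 2 := by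
    simp only [mul_sub, mul_one, Finset.sum_sub_distrib, hsum, sq]
  have hvar_nonneg : 0 ≤ 1 - ∑ i, lam i ^ 2 :=
    hvar ▸ Finset.sum_nonneg fun i _ ↦ mul_nonneg (h0 i) (sub_nonneg.2 (h1 i))
  have hCS : (∑ i, negMulLog (lam i)) ^ 2 ≤ (1 - ∑ i, lam i ^ 2) * ∑ i, entropyWeight (lam i) :=
    hvar ▸ Finset.sum_sq_le_sum_mul_sum_of_sq_le_mul _
      (fun i _ ↦ mul_nonneg (h0 i) (sub_nonneg.2 (h1 i)))
      (fun i _ ↦ entropyWeight_nonneg (h0 i) (h1 i))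
      (fun i _ ↦ (negMulLog_sq_eq_mul_entropyWeight _).le)
  have hweights : (1 - ∑ i, lam i ^ 2) * ∑ i, entropyWeight (lam i) ≤
      (1 - ∑ i, lam i ^ 2) * (n * entropyWeight (n : ℝ)⁻¹) := by
    -- the tangent-line bound needs `λᵢ < 1`; a pure spectrum instead kills the first factor
    by_cases hpure : ∃ i, lam i = 1
    · obtain ⟨i, hi⟩ := hpure
      have : 1 ≤ ∑ i, lam i ^ 2 := by
        simpa [hi] using Finset.single_le_sum (fun j _ ↦ sq_nonneg (lam j)) (Finset.mem_univ i)
      have : 1 - ∑ i, lam i ^ 2 = 0 := by linarith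
      simp [this]
    push Not at hpure
    gcongr
    rw [← Finset.sum_filter_of_ne (p := fun i ↦ lam i ≠ 0) fun i _ hi ↦ by
      contrapose! hi; simp [hi, entropyWeight]]
    refine sum_entropyWeight_le _ lam hn (fun i hi ↦ ?_) ?_ ?_
    · exact ⟨(h0 i).lt_of_ne (Finset.mem_filter.1 hi).2.symm, (h1 i).lt_of_ne (hpure i)⟩
    · rwa [Finset.sum_filter_ne_zero]
    · rwa [← Fintype.card_subtype]
  have hlog := log_natCast_nonneg n
  calc ∑ i, negMulLog (lam i)
      ≤ √((1 - ∑ i, lam i ^ 2) * (n * entropyWeight (n : ℝ)⁻¹)) :=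
        (le_abs_self _).trans (abs_le_sqrt (hCS.trans hweights))
    _ = log n * √(n / (n - 1)) * √(1 - ∑ i, lam i ^ 2) := by
        rw [mul_entropyWeight_inv, sqrt_mul hvar_nonneg, sqrt_mul (sq_nonneg _),
          sqrt_sq hlog]
        ring

namespace Matrix

theorem trace_vecMulVec_self_star {m : Type*} [Fintype m] (v : m → ℂ) :
    (vecMulVec v (star v)).trace = ∑ i, (Complex.normSq (v i) : ℂ) := by
  simp [trace_vecMulVec, dotProduct, Complex.mul_conj]

variable {𝕜 m : Type*} [RCLike 𝕜] [Fintype m] [DecidableEq m] {A : Matrix m m 𝕜}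

theorem IsHermitian.trace_mul_self (hA : A.IsHermitian) :
    (A * A).trace = ∑ i, ((hA.eigenvalues i ^ 2 : ℝ) : 𝕜) := by
  conv_lhs => rw [hA.spectral_theorem, ← map_mul, Unitary.conjStarAlgAut_apply]
  rw [trace_mul_cycle, Unitary.coe_star_mul_self, one_mul, diagonal_mul_diagonal, trace_diagonal]
  simp [sq]

theorem IsHermitian.sum_eigenvalues_eq_one (hA : A.IsHermitian) (htr : A.trace = 1) :
    ∑ i, hA.eigenvalues i = 1 := by
  rw [hA.trace_eq_sum_eigenvalues] at htr
  exact_mod_cast htr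

end Matrix

theorem vnEntropy_eq_sum_negMulLog {M : ℕ} {σ : Matrix (Fin M) (Fin M) ℂ} (hσ : σ.IsHermitian) :
    vnEntropy σ = ∑ i, negMulLog (hσ.eigenvalues i) := by
  rw [vnEntropy, dif_pos hσ]
  rfl

theorem vnEntropy_nonneg {M : ℕ} {σ : Matrix (Fin M) (Fin M) ℂ} (hσ : σ.PosSemidef)
    (htr : σ.trace = 1) : 0 ≤ vnEntropy σ := by
  have hsum := hσ.isHermitian.sum_eigenvalues_eq_one htr
  rw [vnEntropy_eq_sum_negMulLog hσ.isHermitian]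
  exact Finset.sum_nonneg fun i _ ↦ negMulLog_nonneg (hσ.eigenvalues_nonneg i)
    (hsum ▸ Finset.single_le_sum (fun j _ ↦ hσ.eigenvalues_nonneg j) (Finset.mem_univ i))

theorem vnEntropy_le_of_rank_le {M n : ℕ} (hn : 2 ≤ n) {σ : Matrix (Fin M) (Fin M) ℂ}
    (hσ : σ.PosSemidef) (htr : σ.trace = 1) (hrank : σ.rank ≤ n) :
    vnEntropy σ ≤ log n * √(n / (n - 1)) * √(1 - (σ * σ).trace.re) := by
  have hsq : (σ * σ).trace.re = ∑ i, hσ.isHermitian.eigenvalues i ^ 2 := by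
    rw [hσ.isHermitian.trace_mul_self, Complex.re_sum]
    rfl
  rw [vnEntropy_eq_sum_negMulLog hσ.isHermitian, hsq]
  rw [hσ.isHermitian.rank_eq_card_non_zero_eigs] at hrank
  exact sum_negMulLog_le_of_card_support_le _ hn hσ.eigenvalues_nonneg
    (hσ.isHermitian.sum_eigenvalues_eq_one htr) hrank

theorem min_output_entropy_bound (N M n : ℕ) (hn : 2 ≤ n)
    (Φ : Matrix (Fin N) (Fin N) ℂ →ₗ[ℂ] Matrix (Fin M) (Fin M) ℂ)
    (htp : ∀ ρ, (Φ ρ).trace = ρ.trace)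
    (hpos : ∀ ρ, ρ.PosSemidef → (Φ ρ).PosSemidef)
    (hrank : ∀ ψ : Fin N → ℂ, ∑ i, Complex.normSq (ψ i) = 1 →
      (Φ (Matrix.vecMulVec ψ (star ψ))).rank ≤ n)
    (ψ : Fin N → ℂ) (hψ : ∑ i, Complex.normSq (ψ i) = 1) :
    sInf {s : ℝ | ∃ ρ : Matrix (Fin N) (Fin N) ℂ,
        ρ.PosSemidef ∧ ρ.trace = 1 ∧ s = vnEntropy (Φ ρ)} ≤
      Real.log n * Real.sqrt (n / (n - 1)) *
        Real.sqrt (1 - ((Φ (Matrix.vecMulVec ψ (star ψ))) *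
          (Φ (Matrix.vecMulVec ψ (star ψ)))).trace.re) := by
  set ρ := Matrix.vecMulVec ψ (star ψ)
  have hρ : ρ.PosSemidef := Matrix.posSemidef_vecMulVec_self_star ψ
  have hρtr : ρ.trace = 1 := by
    rw [Matrix.trace_vecMulVec_self_star, ← Complex.ofReal_sum, hψ, Complex.ofReal_one]
  have hbdd : BddBelow {s : ℝ | ∃ ρ : Matrix (Fin N) (Fin N) ℂ,
      ρ.PosSemidef ∧ ρ.trace = 1 ∧ s = vnEntropy (Φ ρ)} := by
    refine ⟨0, ?_⟩
    rintro _ ⟨ρ', hρ', hρ'tr, rfl⟩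
    exact vnEntropy_nonneg (hpos ρ' hρ') (by rw [htp, hρ'tr])
  calc _ ≤ vnEntropy (Φ ρ) := csInf_le hbdd ⟨ρ, hρ, hρtr, rfl⟩
    _ ≤ _ := vnEntropy_le_of_rank_le hn (hpos ρ hρ) (by rw [htp, hρtr]) (hrank ψ hψ)
end

section
/- For a density matrix σ on an N-dimensional space (N ≥ 2), S(σ) ≤ log(N)·√(N/(N-1))·√(1 - Tr σ²). -/
/-!
Write `-p log p = √(p (1 - p)) · √g(p)` with `g(t) = t log² t / (1 - t)`. By Cauchy–Schwarz the
entropy of a probability vector `p` is at most `√(∑ pᵢ (1 - pᵢ)) · √(∑ g(pᵢ)) = √(1 - ∑ pᵢ²) · √(∑ g(pᵢ))`,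
and `g` is concave on `[0, 1]`, so by Jensen `∑ g(pᵢ) ≤ N g(1/N) = N log² N / (N - 1)`.
Applied to the eigenvalues of `σ`, this is the theorem.
-/

open Real Set Filter Topology

/-- The junk value `t / 0 = 0` makes this vanish at `t = 1`, which is also its limit there. -/
noncomputable def mulLogSqDivOneSub (t : ℝ) : ℝ := t * log t ^ 2 / (1 - t)

lemma negMulLog_sq_eq_mul_mulLogSqDivOneSub (t : ℝ) :
    negMulLog t ^ 2 = t * (1 - t) * mulLogSqDivOneSub t := by
  rcases eq_or_ne t 1 with rfl | ht
  · simp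
  · have : 1 - t ≠ 0 := sub_ne_zero.mpr ht.symm
    rw [negMulLog, mulLogSqDivOneSub]
    field_simp

lemma mulLogSqDivOneSub_nonneg {t : ℝ} (ht : t ∈ Icc 0 1) : 0 ≤ mulLogSqDivOneSub t :=
  div_nonneg (by have := ht.1; positivity) (sub_nonneg.mpr ht.2)

lemma mulLogSqDivOneSub_inv_natCast (n : ℕ) :
    mulLogSqDivOneSub (n : ℝ)⁻¹ = log n ^ 2 / (n - 1) := by
  rcases eq_or_ne (n : ℝ) 0 with hn | hn
  · simp [mulLogSqDivOneSub, hn]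
  rcases eq_or_ne (n : ℝ) 1 with hn1 | hn1
  · simp [mulLogSqDivOneSub, hn1]
  have : (n : ℝ) - 1 ≠ 0 := sub_ne_zero.mpr hn1
  rw [mulLogSqDivOneSub, log_inv]
  field_simp

lemma hasDerivAt_mulLogSqDivOneSub {t : ℝ} (ht0 : 0 < t) (ht1 : t < 1) :
    HasDerivAt mulLogSqDivOneSub ((log t ^ 2 + 2 * log t * (1 - t)) / (1 - t) ^ 2) t := by
  have hne : 1 - t ≠ 0 := by linarith
  have hnum : HasDerivAt (fun x => x * log x ^ 2) (1 * log t ^ 2 + t * (2 * log t ^ 1 * t⁻¹)) t :=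
    (hasDerivAt_id' t).mul ((hasDerivAt_log ht0.ne').pow 2)
  refine (hnum.div ((hasDerivAt_id' t).const_sub 1) hne).congr_deriv ?_
  field_simp
  ring

lemma hasDerivAt_deriv_mulLogSqDivOneSub {t : ℝ} (ht0 : 0 < t) (ht1 : t < 1) :
    HasDerivAt (fun x => (log x ^ 2 + 2 * log x * (1 - x)) / (1 - x) ^ 2)
      (2 * (log t - (t - 1)) * (t * log t - (t - 1)) / (t * (1 - t) ^ 3)) t := by
  have hne : 1 - t ≠ 0 := by linarith
  have hlog := hasDerivAt_log ht0.ne'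
  have hsub : HasDerivAt (fun x => 1 - x) (-1) t := (hasDerivAt_id' t).const_sub 1
  have hnum : HasDerivAt (fun x => log x ^ 2 + 2 * log x * (1 - x))
      (2 * log t ^ 1 * t⁻¹ + (2 * t⁻¹ * (1 - t) + 2 * log t * -1)) t :=
    (hlog.pow 2).add ((hlog.const_mul 2).mul hsub)
  refine (hnum.div (hsub.pow 2) (pow_ne_zero 2 hne)).congr_deriv ?_
  simp only [Pi.pow_apply]
  field_simp
  ring

lemma tendsto_mulLogSqDivOneSub_nhdsGT_zero :
    Tendsto mulLogSqDivOneSub (𝓝[>] 0) (𝓝 0) := by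
  have hlog : Tendsto (fun x => log x * sqrt x) (𝓝[>] 0) (𝓝 0) := by
    simpa only [sqrt_eq_rpow] using tendsto_log_mul_rpow_nhdsGT_zero one_half_pos
  have hsub : Tendsto (fun x : ℝ => 1 - x) (𝓝[>] 0) (𝓝 1) := by
    simpa using ((continuous_sub_left (1 : ℝ)).tendsto 0).mono_left nhdsWithin_le_nhds
  have := (hlog.pow 2).div hsub one_ne_zero
  rw [zero_pow two_ne_zero, zero_div] at this
  refine this.congr' (eventually_mem_nhdsWithin.mono fun x (hx : 0 < x) => ?_)
  rw [Pi.div_apply, mulLogSqDivOneSub, mul_pow, sq_sqrt hx.le, mul_comm]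

lemma tendsto_mulLogSqDivOneSub_nhdsLT_one :
    Tendsto mulLogSqDivOneSub (𝓝[<] 1) (𝓝 0) := by
  have hslope : Tendsto (slope log 1) (𝓝[<] 1) (𝓝 1) := by
    simpa using (hasDerivAt_iff_tendsto_slope.mp (hasDerivAt_log one_ne_zero)).mono_left
      (nhdsLT_le_nhdsNE 1)
  have hmul : Tendsto (fun x => x * log x) (𝓝[<] 1) (𝓝 0) := by
    simpa using ((continuous_id.mul_log).tendsto (1 : ℝ)).mono_left nhdsWithin_le_nhds
  have := (hmul.mul hslope).neg
  rw [zero_mul, neg_zero] at this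
  refine this.congr' (eventually_mem_nhdsWithin.mono fun x (hx : x < 1) => ?_)
  have : x - 1 ≠ 0 := sub_ne_zero.mpr hx.ne
  have : 1 - x ≠ 0 := sub_ne_zero.mpr hx.ne'
  rw [mulLogSqDivOneSub, slope_def_field, log_one, sub_zero]
  field_simp
  ring

lemma continuousOn_mulLogSqDivOneSub : ContinuousOn mulLogSqDivOneSub (Icc 0 1) := by
  intro t ht
  rcases ht.1.eq_or_lt with rfl | h0
  · refine (continuousWithinAt_Ioi_iff_Ici.mp ?_).mono Icc_subset_Ici_self
    simpa [ContinuousWithinAt, mulLogSqDivOneSub] using tendsto_mulLogSqDivOneSub_nhdsGT_zero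
  rcases ht.2.eq_or_lt with rfl | h1
  · refine (continuousWithinAt_Iio_iff_Iic.mp ?_).mono Icc_subset_Iic_self
    simpa [ContinuousWithinAt, mulLogSqDivOneSub] using tendsto_mulLogSqDivOneSub_nhdsLT_one
  · exact (continuousAt_id.mul ((continuousAt_log h0.ne').pow 2)).div
      (continuousAt_const.sub continuousAt_id) (sub_ne_zero.mpr h1.ne') |>.continuousWithinAt

lemma concaveOn_mulLogSqDivOneSub : ConcaveOn ℝ (Icc 0 1) mulLogSqDivOneSub :=
  concaveOn_of_hasDerivWithinAt2_nonpos (convex_Icc 0 1) continuousOn_mulLogSqDivOneSub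
    (fun t ht => (hasDerivAt_mulLogSqDivOneSub (interior_Icc.subset ht).1
      (interior_Icc.subset ht).2).hasDerivWithinAt)
    (fun t ht => (hasDerivAt_deriv_mulLogSqDivOneSub (interior_Icc.subset ht).1
      (interior_Icc.subset ht).2).hasDerivWithinAt)
    (fun t ht => by
      obtain ⟨ht0, ht1⟩ := interior_Icc.subset ht
      have hlog : log t ≤ t - 1 := log_le_sub_one_of_pos ht0
      have hmul : t - 1 ≤ t * log t := by
        have := mul_le_mul_of_nonneg_left (one_sub_inv_le_log_of_pos ht0) ht0.le
        rwa [mul_one_sub, mul_inv_cancel₀ ht0.ne'] at this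
      refine div_nonpos_of_nonpos_of_nonneg ?_ (by have := sub_pos.mpr ht1; positivity)
      exact mul_nonpos_of_nonpos_of_nonneg (by linarith) (by linarith))

lemma ConcaveOn.sum_le_card_mul_map_average {ι : Type*} [Fintype ι] [Nonempty ι] {s : Set ℝ}
    {f : ℝ → ℝ} (hf : ConcaveOn ℝ s f) {p : ι → ℝ} (hp : ∀ i, p i ∈ s) :
    ∑ i, f (p i) ≤ Fintype.card ι * f ((Fintype.card ι : ℝ)⁻¹ * ∑ i, p i) := by
  have hN : (0 : ℝ) < Fintype.card ι := Nat.cast_pos.mpr Fintype.card_pos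
  have hJensen := hf.le_map_sum (t := Finset.univ) (w := fun _ => (Fintype.card ι : ℝ)⁻¹)
    (fun _ _ => by positivity) (by simp [hN.ne']) (fun i _ => hp i)
  simp only [smul_eq_mul, ← Finset.mul_sum] at hJensen
  calc ∑ i, f (p i) = Fintype.card ι * ((Fintype.card ι : ℝ)⁻¹ * ∑ i, f (p i)) := by
        field_simp
    _ ≤ _ := by gcongr

theorem sum_negMulLog_le {ι : Type*} [Fintype ι] {p : ι → ℝ} (h0 : ∀ i, 0 ≤ p i)
    (h1 : ∑ i, p i = 1) :
    ∑ i, negMulLog (p i) ≤ log (Fintype.card ι) *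
      sqrt (Fintype.card ι / (Fintype.card ι - 1)) * sqrt (1 - ∑ i, p i ^ 2) := by
  have : Nonempty ι := by
    by_contra h
    simp [not_nonempty_iff.mp h] at h1
  set N : ℕ := Fintype.card ι
  have hp : ∀ i, p i ∈ Icc 0 1 := fun i =>
    ⟨h0 i, h1 ▸ Finset.single_le_sum (fun j _ => h0 j) (Finset.mem_univ i)⟩
  have hlinear : ∑ i, p i * (1 - p i) = 1 - ∑ i, p i ^ 2 := by
    simp only [mul_one_sub, Finset.sum_sub_distrib, h1, sq]
  have hJensen : ∑ i, mulLogSqDivOneSub (p i) ≤ N * (log N ^ 2 / (N - 1)) := by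
    simpa [h1, mulLogSqDivOneSub_inv_natCast] using
      concaveOn_mulLogSqDivOneSub.sum_le_card_mul_map_average hp
  calc ∑ i, negMulLog (p i) = ∑ i, sqrt (p i * (1 - p i)) * sqrt (mulLogSqDivOneSub (p i)) := by
        refine Finset.sum_congr rfl fun i _ => ?_
        rw [← sqrt_mul (mul_nonneg (hp i).1 (sub_nonneg.mpr (hp i).2)),
          ← negMulLog_sq_eq_mul_mulLogSqDivOneSub, sqrt_sq (negMulLog_nonneg (hp i).1 (hp i).2)]
    _ ≤ sqrt (∑ i, p i * (1 - p i)) * sqrt (∑ i, mulLogSqDivOneSub (p i)) :=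
        sum_sqrt_mul_sqrt_le _ (fun i => mul_nonneg (hp i).1 (sub_nonneg.mpr (hp i).2))
          (fun i => mulLogSqDivOneSub_nonneg (hp i))
    _ ≤ sqrt (1 - ∑ i, p i ^ 2) * sqrt (log N ^ 2 * (N / (N - 1))) := by
        rw [hlinear]
        gcongr
        exact hJensen.trans_eq (by ring)
    _ = log N * sqrt (N / (N - 1)) * sqrt (1 - ∑ i, p i ^ 2) := by
        rw [sqrt_mul (sq_nonneg _), sqrt_sq (log_natCast_nonneg N)]
        ring

lemma Matrix.IsHermitian.trace_mul_self_s19 {𝕜 n : Type*} [RCLike 𝕜] [Fintype n] [DecidableEq n]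
    {A : Matrix n n 𝕜} (hA : A.IsHermitian) :
    (A * A).trace = ∑ i, ((hA.eigenvalues i ^ 2 : ℝ) : 𝕜) := by
  conv_lhs => rw [hA.spectral_theorem]
  rw [← map_mul, Unitary.conjStarAlgAut_apply, Matrix.trace_mul_cycle, Unitary.coe_star_mul_self,
    one_mul, Matrix.diagonal_mul_diagonal, Matrix.trace_diagonal]
  simp [sq]

open ComplexOrder

theorem entropy_le_purity_bound_general (N : ℕ)
    (σ : Matrix (Fin N) (Fin N) ℂ) (hσ : σ.PosSemidef) (htr : σ.trace = 1) :
    ∑ i, (-(hσ.1.eigenvalues i) * Real.log (hσ.1.eigenvalues i)) ≤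
      Real.log N * Real.sqrt (N / (N - 1)) *
        Real.sqrt (1 - (σ * σ).trace.re) := by
  have hsum : ∑ i, hσ.1.eigenvalues i = 1 := by
    have := hσ.1.trace_eq_sum_eigenvalues
    rw [htr] at this
    simpa using (congrArg Complex.re this).symm
  have hpurity : (σ * σ).trace.re = ∑ i, hσ.1.eigenvalues i ^ 2 := by
    rw [hσ.1.trace_mul_self_s19, Complex.re_sum]
    exact Finset.sum_congr rfl fun i _ => Complex.ofReal_re _
  rw [hpurity]
  simpa only [Fintype.card_fin, negMulLog] using sum_negMulLog_le hσ.eigenvalues_nonneg hsum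

theorem entropy_le_purity_bound (N : ℕ) (hN : 2 ≤ N)
    (σ : Matrix (Fin N) (Fin N) ℂ) (hσ : σ.PosSemidef) (htr : σ.trace = 1) :
    ∑ i, (-(hσ.1.eigenvalues i) * Real.log (hσ.1.eigenvalues i)) ≤
      Real.log N * Real.sqrt (N / (N - 1)) *
        Real.sqrt (1 - (σ * σ).trace.re) :=
  entropy_le_purity_bound_general N σ hσ htr
end
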